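/- arXiv:2303.17267 — 13 statements merged into one kernel-verified Lean document; each statement's English description precedes it below -/
import Mathlib

section
/- Let X be a first-countable topological space and let (f_n)_{n∈ℕ} be a sequence of functions from X to the extended reals [−∞,+∞]. Then for every x ∈ X, the infimum over all sequences (xⁿ)_{n∈ℕ} in X converging to x of limsup_{n→∞} f_n(xⁿ) equals the Γ-upper limit Γ-limsup_n f_n(x) = sup_{U} limsup_{n→∞} inf_{y∈U} f_n(y), where U ranges over all neighborhoods of x. -/
/-!
Every sequence `u n → x` eventually enters each neighbourhood `U` of `x`, so
`⨅ y ∈ U, f n y ≤ f n (u n)` eventually; this gives the inequality `≥`. Conversely, let `L` be the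
Γ-upper limit, `c k ↓ L` with `c k > L` and `B k` a decreasing neighbourhood basis of `x`. For each
`k`, eventually in `n` some `y ∈ B k` has `f n y < c k`. A diagonal choice of `k = φ n → ∞` then
yields points `u n ∈ B (φ n)` with `f n (u n) < c (φ n)`, so `u n → x` and
`limsup f n (u n) ≤ L`.
-/

open Filter Topology

def gammaLimsup {ι X β : Type*} [TopologicalSpace X] [CompleteLattice β] (f : ι → X → β)
    (ℓ : Filter ι) (x : X) : β :=
  ⨆ (U : Set X) (_ : U ∈ 𝓝 x), limsup (fun n => ⨅ y ∈ U, f n y) ℓ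

theorem Filter.exists_tendsto_atTop_eventually_diagonal {P : ℕ → ℕ → Prop}
    (hP : ∀ k, ∀ᶠ n in atTop, P k n) :
    ∃ φ : ℕ → ℕ, Tendsto φ atTop atTop ∧ ∀ᶠ n in atTop, P (φ n) n := by
  classical
  let φ : ℕ → ℕ := fun n => Nat.findGreatest (P · n) n
  refine ⟨φ, tendsto_atTop.2 fun k => ?_, ?_⟩
  · filter_upwards [hP k, eventually_ge_atTop k] with n hPkn hkn
    exact Nat.le_findGreatest hkn hPkn
  · filter_upwards [hP 0] with n hP0n
    exact Nat.findGreatest_spec (P := (P · n)) (Nat.zero_le n) hP0n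

section

variable {ι X β : Type*} [TopologicalSpace X]

theorem gammaLimsup_le_limsup_of_tendsto [CompleteLattice β] (f : ι → X → β) {ℓ : Filter ι}
    {x : X} {u : ι → X} (hu : Tendsto u ℓ (𝓝 x)) :
    gammaLimsup f ℓ x ≤ limsup (fun n => f n (u n)) ℓ :=
  iSup₂_le fun _U hU => limsup_le_limsup <|
    (hu.eventually_mem hU).mono fun n hn => iInf₂_le (u n) hn

theorem eventually_exists_lt_of_gammaLimsup_lt [CompleteLinearOrder β] {f : ι → X → β}
    {ℓ : Filter ι} {x : X} {U : Set X} {c : β} (hU : U ∈ 𝓝 x) (hc : gammaLimsup f ℓ x < c) :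
    ∀ᶠ n in ℓ, ∃ y ∈ U, f n y < c := by
  have hlt : limsup (fun n => ⨅ y ∈ U, f n y) ℓ < c :=
    (le_iSup₂_of_le U hU le_rfl).trans_lt hc
  filter_upwards [eventually_lt_of_limsup_lt hlt] with n hn
  simpa only [iInf_lt_iff, exists_prop] using hn

theorem exists_tendsto_limsup_le_gammaLimsup [FirstCountableTopology X] [CompleteLinearOrder β]
    [DenselyOrdered β] [TopologicalSpace β] [OrderTopology β] [FirstCountableTopology β]
    (f : ℕ → X → β) (x : X) :
    ∃ u : ℕ → X, Tendsto u atTop (𝓝 x) ∧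
      limsup (fun n => f n (u n)) atTop ≤ gammaLimsup f atTop x := by
  set L := gammaLimsup f atTop x
  rcases eq_or_ne L ⊤ with hL | hL
  · exact ⟨fun _ => x, tendsto_const_nhds, hL ▸ le_top⟩
  obtain ⟨c, hc_anti, hc_mem, hc_lim⟩ := exists_seq_strictAnti_tendsto' (lt_top_iff_ne_top.2 hL)
  obtain ⟨B, hB⟩ := (𝓝 x).exists_antitone_basis
  have hBx : ∀ k, B k ∈ 𝓝 x := fun k => hB.mem_of_mem trivial
  obtain ⟨φ, hφ, hφP⟩ := exists_tendsto_atTop_eventually_diagonal fun k =>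
    eventually_exists_lt_of_gammaLimsup_lt (hBx k) (hc_mem k).1
  have : Nonempty X := ⟨x⟩
  let u : ℕ → X := fun n => Classical.epsilon fun y => y ∈ B (φ n) ∧ f n y < c (φ n)
  have hu : ∀ k, ∀ᶠ n in atTop, u n ∈ B k ∧ f n (u n) < c k := fun k => by
    filter_upwards [hφP, hφ.eventually_ge_atTop k] with n hn hkn
    obtain ⟨hmem, hlt⟩ :=
      Classical.epsilon_spec (p := fun y => y ∈ B (φ n) ∧ f n y < c (φ n)) hn
    exact ⟨hB.antitone hkn hmem, hlt.trans_le (hc_anti.antitone hkn)⟩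
  refine ⟨u, hB.tendsto_right_iff.2 fun k _ => (hu k).mono fun _ h => h.1, ?_⟩
  calc limsup (fun n => f n (u n)) atTop
      ≤ ⨅ k, c k := le_iInf fun k => limsup_le_of_le (by isBoundedDefault)
        ((hu k).mono fun _ h => h.2.le)
    _ = L := tendsto_nhds_unique (tendsto_atTop_iInf hc_anti.antitone) hc_lim

end

/-- For a first-countable topological space `X` and a sequence of
functions `f n : X → EReal`, the infimum over all sequences `u` converging to `x` of
`limsup_n (f n (u n))` equals the Γ-upper limit
`⨆ U ∈ 𝓝 x, limsup_n (⨅ y ∈ U, f n y)`. -/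
theorem gammaSeq_limsup_eq_gammaLimsup {X : Type*} [TopologicalSpace X]
    [FirstCountableTopology X]
    (f : ℕ → X → EReal) (x : X) :
    (⨅ (u : ℕ → X) (_ : Tendsto u atTop (𝓝 x)),
        limsup (fun n => f n (u n)) atTop) =
      ⨆ (U : Set X) (_ : U ∈ 𝓝 x),
        limsup (fun n => ⨅ y ∈ U, f n y) atTop := by
  obtain ⟨u, hu, hle⟩ := exists_tendsto_limsup_le_gammaLimsup f x
  exact le_antisymm (iInf₂_le_of_le u hu hle)
    (le_iInf₂ fun _u hu => gammaLimsup_le_limsup_of_tendsto f hu)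
end

section
/- Let X be a first-countable topological space, (f_n)_{n∈ℕ} a sequence of functions from X to the extended reals [−∞,+∞], and f : X → [−∞,+∞]. Suppose that for every x ∈ X the infimum over all sequences (xⁿ) converging to x of limsup_{n→∞} f_n(xⁿ) and the infimum over all such sequences of liminf_{n→∞} f_n(xⁿ) both equal f(x). Then (f_n) Γ-converges to f: for every x ∈ X, sup_{U} limsup_{n→∞} inf_{y∈U} f_n(y) = sup_{U} liminf_{n→∞} inf_{y∈U} f_n(y) = f(x), where U ranges over all neighborhoods of x. -/
/-!
The neighbourhood Γ-limits are squeezed between the sequential ones: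
`flim x = Γ-seq-liminf ≤ Γ-liminf ≤ Γ-limsup ≤ Γ-seq-limsup = flim x`.
The last inequality holds in any space, since `⨅ y ∈ U, f n y ≤ f n (u n)` once `u n ∈ U`.
For the first one, if the Γ-liminf is `< c`, then for every neighbourhood `U` of `x` there are
infinitely many `n` with a point `y ∈ U` where `f n y < c`; first countability lets us pick
these points along a countable shrinking basis and interpolate them by a single sequence
converging to `x`.
-/

open Filter Topology

theorem exists_tendsto_frequently_of_forall_nhds {X : Type*} [TopologicalSpace X]
    [FirstCountableTopology X] {x : X} {P : ℕ → X → Prop}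
    (h : ∀ U ∈ 𝓝 x, ∃ᶠ n in atTop, ∃ y ∈ U, P n y) :
    ∃ u : ℕ → X, Tendsto u atTop (𝓝 x) ∧ ∃ᶠ n in atTop, P n (u n) := by
  obtain ⟨U, hU⟩ := (𝓝 x).exists_antitone_basis
  obtain ⟨φ, hφ, hP⟩ := extraction_forall_of_frequently fun k => h (U k) (hU.mem k)
  choose y hyU hyP using hP
  set u : ℕ → X := Function.extend φ y fun _ => x
  have hu_φ : ∀ k, u (φ k) = y k := hφ.injective.extend_apply y _
  refine ⟨u, hU.1.tendsto_right_iff.2 fun m _ => ?_, ?_⟩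
  · filter_upwards [eventually_ge_atTop (φ m)] with n hn
    by_cases hn_range : ∃ k, φ k = n
    · obtain ⟨k, rfl⟩ := hn_range
      rw [hu_φ]
      exact hU.2 (hφ.le_iff_le.1 hn) (hyU k)
    · rw [show u n = x from Function.extend_apply' _ _ _ hn_range]
      exact mem_of_mem_nhds (hU.mem m)
  · exact hφ.tendsto_atTop.frequently (Frequently.of_forall fun k => by rw [hu_φ]; exact hyP k)

theorem iSup_nhds_limsup_le_iInf_tendsto_limsup {ι X α : Type*} [TopologicalSpace X]
    [CompleteLattice α] (f : ι → X → α) (l : Filter ι) (x : X) :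
    (⨆ (U : Set X) (_ : U ∈ 𝓝 x), limsup (fun i => ⨅ y ∈ U, f i y) l) ≤
      ⨅ (u : ι → X) (_ : Tendsto u l (𝓝 x)), limsup (fun i => f i (u i)) l :=
  iSup₂_le fun U hU => le_iInf₂ fun u hu => limsup_le_limsup <| by
    filter_upwards [hu hU] with i hi
    exact iInf₂_le (u i) hi

theorem iInf_tendsto_liminf_le_iSup_nhds_liminf {X α : Type*} [TopologicalSpace X]
    [FirstCountableTopology X] [CompleteLinearOrder α] [DenselyOrdered α]
    (f : ℕ → X → α) (x : X) :
    (⨅ (u : ℕ → X) (_ : Tendsto u atTop (𝓝 x)), liminf (fun n => f n (u n)) atTop) ≤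
      ⨆ (U : Set X) (_ : U ∈ 𝓝 x), liminf (fun n => ⨅ y ∈ U, f n y) atTop := by
  refine le_of_forall_gt_imp_ge_of_dense fun c hc => ?_
  have hfreq : ∀ U ∈ 𝓝 x, ∃ᶠ n in atTop, ∃ y ∈ U, f n y < c := fun U hU =>
    (frequently_lt_of_liminf_lt (by isBoundedDefault) ((le_iSup₂ U hU).trans_lt hc)).mono
      fun _ hn => by simpa only [iInf_lt_iff, exists_prop] using hn
  obtain ⟨u, hu, hfu⟩ := exists_tendsto_frequently_of_forall_nhds hfreq
  exact (iInf₂_le u hu).trans (liminf_le_of_frequently_le' (hfu.mono fun _ => le_of_lt))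

/-- If on a first-countable space both the sequential Γ-upper and
Γ-lower limits of `(f n)` coincide with `f` at every point, then `(f n)` Γ-converges
to `f`:  both the Γ-upper limit and the Γ-lower limit (defined via neighborhoods)
equal `f x` at every `x`. -/
theorem gammaConverges_of_seq_gamma_limits {X : Type*} [TopologicalSpace X]
    [FirstCountableTopology X]
    (f : ℕ → X → EReal) (flim : X → EReal)
    (h1 : ∀ x : X, (⨅ (u : ℕ → X) (_ : Tendsto u atTop (𝓝 x)),
        limsup (fun n => f n (u n)) atTop) = flim x)
    (h2 : ∀ x : X, (⨅ (u : ℕ → X) (_ : Tendsto u atTop (𝓝 x)),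
        liminf (fun n => f n (u n)) atTop) = flim x) :
    ∀ x : X,
      ((⨆ (U : Set X) (_ : U ∈ 𝓝 x),
          limsup (fun n => ⨅ y ∈ U, f n y) atTop) = flim x) ∧
      ((⨆ (U : Set X) (_ : U ∈ 𝓝 x),
          liminf (fun n => ⨅ y ∈ U, f n y) atTop) = flim x) := by
  intro x
  have hupper := iSup_nhds_limsup_le_iInf_tendsto_limsup f atTop x
  have hlower := iInf_tendsto_liminf_le_iSup_nhds_liminf f x
  rw [h1] at hupper
  rw [h2] at hlower
  have hmid : (⨆ (U : Set X) (_ : U ∈ 𝓝 x), liminf (fun n => ⨅ y ∈ U, f n y) atTop) ≤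
      ⨆ (U : Set X) (_ : U ∈ 𝓝 x), limsup (fun n => ⨅ y ∈ U, f n y) atTop :=
    iSup₂_mono fun _ _ => liminf_le_limsup
  exact ⟨le_antisymm hupper (hlower.trans hmid), le_antisymm (hmid.trans hupper) hlower⟩
end

section
/- Let X be a topological space, (f_n)_{n∈ℕ} a sequence of functions from X to the extended reals [−∞,+∞], and f : X → [−∞,+∞]. Suppose that for every x ∈ X the infimum over all sequences (xⁿ) converging to x of limsup_{n→∞} f_n(xⁿ) and the infimum over all such sequences of liminf_{n→∞} f_n(xⁿ) both equal f(x). Then inf_{x∈X} f(x) ≥ limsup_{n→∞} ( inf_{x∈X} f_n(x) ). -/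
open Filter Topology

theorem iInf_gammaLimit_ge_limsup_iInf_general {X : Type*} [TopologicalSpace X]
    (f : ℕ → X → EReal) (flim : X → EReal)
    (h1 : ∀ x : X, (⨅ (u : ℕ → X) (_ : Tendsto u atTop (𝓝 x)),
        limsup (fun n => f n (u n)) atTop) = flim x) :
    (⨅ x : X, flim x) ≥ limsup (fun n => ⨅ x : X, f n x) atTop := by
  refine le_iInf fun x => ?_
  rw [← h1 x]
  refine le_iInf₂ fun u _ => ?_
  exact limsup_le_limsup (Eventually.of_forall fun n => iInf_le _ (u n))

/-- If for every `x` the infimum over sequences converging to `x`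
of `limsup_n f n (u n)` and of `liminf_n f n (u n)` both equal `flim x`, then
`⨅ x, flim x ≥ limsup_n (⨅ x, f n x)`. -/
theorem iInf_gammaLimit_ge_limsup_iInf {X : Type*} [TopologicalSpace X]
    (f : ℕ → X → EReal) (flim : X → EReal)
    (h1 : ∀ x : X, (⨅ (u : ℕ → X) (_ : Tendsto u atTop (𝓝 x)),
        limsup (fun n => f n (u n)) atTop) = flim x)
    (h2 : ∀ x : X, (⨅ (u : ℕ → X) (_ : Tendsto u atTop (𝓝 x)),
        liminf (fun n => f n (u n)) atTop) = flim x) :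
    (⨅ x : X, flim x) ≥ limsup (fun n => ⨅ x : X, f n x) atTop :=
  iInf_gammaLimit_ge_limsup_iInf_general f flim h1
end

section
/- Let X be a topological space, (f_n)_{n∈ℕ} a sequence of functions from X to the extended reals [−∞,+∞], and f : X → [−∞,+∞]. Suppose that for every x ∈ X the infimum over all sequences (xⁿ) converging to x of limsup_{n→∞} f_n(xⁿ) and the infimum over all such sequences of liminf_{n→∞} f_n(xⁿ) both equal f(x). If moreover there exist x₀ ∈ X and a sequence (xⁿ) converging to x₀ such that liminf_{n→∞} f_n(xⁿ) = liminf_{n→∞} ( inf_{x∈X} f_n(x) ), then f(x₀) = inf_{x∈X} f(x) and the sequence of infima converges: lim_{n→∞} ( inf_{x∈X} f_n(x) ) = inf_{x∈X} f(x). -/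
/-!
Testing the Γ-limsup against recovery sequences bounds the limsup of the infima `inf_X f n` by
`flim x` for every `x`, while the Γ-liminf inequality along `u` bounds their liminf from below by
`flim x₀`. Since `inf_X flim ≤ flim x₀`, liminf and limsup of the infima are squeezed together.
-/

open Filter Topology

theorem limsup_iInf_le_limsup_comp {ι X α : Type*} [CompleteLattice α] (l : Filter ι)
    (f : ι → X → α) (u : ι → X) :
    limsup (fun n => ⨅ x, f n x) l ≤ limsup (fun n => f n (u n)) l :=
  limsup_le_limsup (Eventually.of_forall fun n => iInf_le _ (u n))

/-- Under the sequential Γ-convergence hypotheses, if some sequence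
`u → x₀` realizes `liminf_n f n (u n) = liminf_n (inf_X f n)`, then `x₀` minimizes
`flim` and the infima converge: `lim_n (inf_X f n) = inf_X flim`. -/
theorem minimizer_of_gammaConvergence {X : Type*} [TopologicalSpace X]
    (f : ℕ → X → EReal) (flim : X → EReal)
    (h1 : ∀ x : X, (⨅ (u : ℕ → X) (_ : Tendsto u atTop (𝓝 x)),
        limsup (fun n => f n (u n)) atTop) = flim x)
    (h2 : ∀ x : X, (⨅ (u : ℕ → X) (_ : Tendsto u atTop (𝓝 x)),
        liminf (fun n => f n (u n)) atTop) = flim x)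
    (x₀ : X) (u : ℕ → X) (hu : Tendsto u atTop (𝓝 x₀))
    (heq : liminf (fun n => f n (u n)) atTop
        = liminf (fun n => ⨅ x : X, f n x) atTop) :
    flim x₀ = ⨅ x : X, flim x ∧
      Tendsto (fun n => ⨅ x : X, f n x) atTop (𝓝 (⨅ x : X, flim x)) := by
  set m : ℕ → EReal := fun n => ⨅ x : X, f n x
  have lower : flim x₀ ≤ liminf m atTop := by
    rw [← heq, ← h2 x₀]
    exact iInf₂_le u hu
  have upper : limsup m atTop ≤ ⨅ x : X, flim x := by
    refine le_iInf fun x => ?_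
    rw [← h1 x]
    exact le_iInf₂ fun v _ => limsup_iInf_le_limsup_comp atTop f v
  have minimizer : flim x₀ = ⨅ x : X, flim x :=
    le_antisymm ((lower.trans liminf_le_limsup).trans upper) (iInf_le flim x₀)
  exact ⟨minimizer, tendsto_of_le_liminf_of_limsup_le (minimizer ▸ lower) upper⟩
end

section
/- Let X and Y be topological spaces, let (f_n) and (g_n) be sequences of functions from X × Y to [0,+∞], let (x₀,y₀) ∈ X × Y and let a, b ∈ [0,+∞]. Assume: (A) the infimum over all sequences xⁿ → x₀ in X of ( the supremum over all sequences yⁿ → y₀ in Y of limsup_{n→∞} f_n(xⁿ,yⁿ) ) equals a, and the infimum over all sequences xⁿ → x₀ of ( the infimum over all sequences yⁿ → y₀ of liminf_{n→∞} f_n(xⁿ,yⁿ) ) also equals a; (B) the supremum over all sequences xⁿ → x₀ of ( the infimum over all sequences yⁿ → y₀ of limsup_{n→∞} g_n(xⁿ,yⁿ) ) equals b, and the infimum over all sequences xⁿ → x₀ of ( the infimum over all sequences yⁿ → y₀ of liminf_{n→∞} g_n(xⁿ,yⁿ) ) also equals b. Then the infimum over all sequences xⁿ → x₀ of the infimum over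 all sequences yⁿ → y₀ of limsup_{n→∞} (f_n + g_n)(xⁿ,yⁿ) equals a + b, and the same holds with liminf in place of limsup. -/
open Filter Topology
open scoped ENNReal

lemma my_limsup_add_le {ι : Type*} (F : Filter ι) (u v : ι → ℝ≥0∞) :
    limsup (fun i => u i + v i) F ≤ limsup u F + limsup v F := by
  refine ENNReal.le_of_forall_pos_le_add fun ε hε hlt => ?_
  set A := limsup u F
  set B := limsup v F
  have hA : A ≠ ⊤ := fun h => by simp [h] at hlt
  have hB : B ≠ ⊤ := fun h => by simp [h, add_comm] at hlt
  have hε2 : ((ε : ℝ≥0∞) / 2) ≠ 0 := by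
    simp [ENNReal.div_eq_zero_iff, hε.ne']
  have h1 : A < A + ε / 2 := ENNReal.lt_add_right hA hε2
  have h2 : B < B + ε / 2 := ENNReal.lt_add_right hB hε2
  have e1 : ∀ᶠ i in F, u i < A + ε / 2 := eventually_lt_of_limsup_lt h1
  have e2 : ∀ᶠ i in F, v i < B + ε / 2 := eventually_lt_of_limsup_lt h2
  have : ∀ᶠ i in F, u i + v i ≤ A + B + ε := by
    filter_upwards [e1, e2] with i h1' h2'
    calc u i + v i ≤ (A + ε / 2) + (B + ε / 2) := add_le_add h1'.le h2'.le
      _ = A + B + ε := by rw [add_add_add_comm, ENNReal.add_halves]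
  exact limsup_le_of_le (by isBoundedDefault) this

lemma my_le_liminf_add {ι : Type*} (F : Filter ι) (u v : ι → ℝ≥0∞) :
    liminf u F + liminf v F ≤ liminf (fun i => u i + v i) F := by
  set A := liminf u F with hA
  set B := liminf v F with hB
  set C := liminf (fun i => u i + v i) F with hC
  have hAC : A ≤ C := liminf_le_liminf (Eventually.of_forall fun i => le_self_add)
  have hBC : B ≤ C := liminf_le_liminf (Eventually.of_forall fun i => le_add_self)
  rcases eq_or_ne A 0 with h0 | hA0
  · simpa [h0] using hBC
  rcases eq_or_ne B 0 with h0 | hB0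
  · simpa [h0] using hAC
  refine ENNReal.le_of_forall_pos_le_add fun ε hε hlt => ?_
  have hAt : A ≠ ⊤ := (hAC.trans_lt hlt).ne
  have hBt : B ≠ ⊤ := (hBC.trans_lt hlt).ne
  have hε2 : ((ε : ℝ≥0∞) / 2) ≠ 0 := by
    simp [ENNReal.div_eq_zero_iff, hε.ne']
  have h1 : A - ε / 2 < A := ENNReal.sub_lt_self hAt hA0 hε2
  have h2 : B - ε / 2 < B := ENNReal.sub_lt_self hBt hB0 hε2
  have e1 : ∀ᶠ i in F, A - ε / 2 < u i := eventually_lt_of_lt_liminf h1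
  have e2 : ∀ᶠ i in F, B - ε / 2 < v i := eventually_lt_of_lt_liminf h2
  have key : (A - ε / 2) + (B - ε / 2) ≤ C := by
    refine le_liminf_of_le (by isBoundedDefault) ?_
    filter_upwards [e1, e2] with i h1' h2'
    exact add_le_add h1'.le h2'.le
  calc A + B ≤ ((A - ε / 2) + ε / 2) + ((B - ε / 2) + ε / 2) :=
        add_le_add le_tsub_add le_tsub_add
    _ = (A - ε / 2) + (B - ε / 2) + ε := by
        rw [add_add_add_comm, ENNReal.add_halves]
    _ ≤ C + ε := add_le_add_left key _

set_option maxHeartbeats 1000000 in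
/-- Lemma on sums of sequential Γ-limits on a product space.
If the mixed sequential Γ-limits of `f` at `(x₀, y₀)` (with value `a`) and of `g`
(with value `b`) exist as stated, then the sequential Γ-limit of `f + g` with both
variables converging is `a + b`, for both `limsup` and `liminf`. -/
theorem gammaSeq_add {X Y : Type*} [TopologicalSpace X] [TopologicalSpace Y]
    (f g : ℕ → X × Y → ℝ≥0∞) (x₀ : X) (y₀ : Y) (a b : ℝ≥0∞)
    (hA1 : (⨅ (u : ℕ → X) (_ : Tendsto u atTop (𝓝 x₀)),
        ⨆ (v : ℕ → Y) (_ : Tendsto v atTop (𝓝 y₀)),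
          limsup (fun n => f n (u n, v n)) atTop) = a)
    (hA2 : (⨅ (u : ℕ → X) (_ : Tendsto u atTop (𝓝 x₀)),
        ⨅ (v : ℕ → Y) (_ : Tendsto v atTop (𝓝 y₀)),
          liminf (fun n => f n (u n, v n)) atTop) = a)
    (hB1 : (⨆ (u : ℕ → X) (_ : Tendsto u atTop (𝓝 x₀)),
        ⨅ (v : ℕ → Y) (_ : Tendsto v atTop (𝓝 y₀)),
          limsup (fun n => g n (u n, v n)) atTop) = b)
    (hB2 : (⨅ (u : ℕ → X) (_ : Tendsto u atTop (𝓝 x₀)),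
        ⨅ (v : ℕ → Y) (_ : Tendsto v atTop (𝓝 y₀)),
          liminf (fun n => g n (u n, v n)) atTop) = b) :
    ((⨅ (u : ℕ → X) (_ : Tendsto u atTop (𝓝 x₀)),
        ⨅ (v : ℕ → Y) (_ : Tendsto v atTop (𝓝 y₀)),
          limsup (fun n => f n (u n, v n) + g n (u n, v n)) atTop) = a + b) ∧
    ((⨅ (u : ℕ → X) (_ : Tendsto u atTop (𝓝 x₀)),
        ⨅ (v : ℕ → Y) (_ : Tendsto v atTop (𝓝 y₀)),
          liminf (fun n => f n (u n, v n) + g n (u n, v n)) atTop) = a + b) := by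
  -- Lower bound: `a + b ≤` the liminf Γ-limit.
  have hlow : a + b ≤ ⨅ (u : ℕ → X) (_ : Tendsto u atTop (𝓝 x₀)),
      ⨅ (v : ℕ → Y) (_ : Tendsto v atTop (𝓝 y₀)),
        liminf (fun n => f n (u n, v n) + g n (u n, v n)) atTop := by
    refine le_iInf₂ fun u hu => le_iInf₂ fun v hv => ?_
    have h1 : a ≤ liminf (fun n => f n (u n, v n)) atTop := by
      rw [← hA2]; exact iInf₂_le_of_le u hu (iInf₂_le v hv)
    have h2 : b ≤ liminf (fun n => g n (u n, v n)) atTop := by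
      rw [← hB2]; exact iInf₂_le_of_le u hu (iInf₂_le v hv)
    exact (add_le_add h1 h2).trans (my_le_liminf_add atTop _ _)
  -- The liminf Γ-limit is at most the limsup Γ-limit.
  have hmid : (⨅ (u : ℕ → X) (_ : Tendsto u atTop (𝓝 x₀)),
      ⨅ (v : ℕ → Y) (_ : Tendsto v atTop (𝓝 y₀)),
        liminf (fun n => f n (u n, v n) + g n (u n, v n)) atTop)
      ≤ ⨅ (u : ℕ → X) (_ : Tendsto u atTop (𝓝 x₀)),
      ⨅ (v : ℕ → Y) (_ : Tendsto v atTop (𝓝 y₀)),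
        limsup (fun n => f n (u n, v n) + g n (u n, v n)) atTop :=
    iInf₂_mono fun u _ => iInf₂_mono fun v _ => liminf_le_limsup
  -- Upper bound: the limsup Γ-limit is at most `a + b`.
  have hup : (⨅ (u : ℕ → X) (_ : Tendsto u atTop (𝓝 x₀)),
      ⨅ (v : ℕ → Y) (_ : Tendsto v atTop (𝓝 y₀)),
        limsup (fun n => f n (u n, v n) + g n (u n, v n)) atTop) ≤ a + b := by
    have step : ∀ (u : ℕ → X), Tendsto u atTop (𝓝 x₀) →
        (⨅ (v : ℕ → Y) (_ : Tendsto v atTop (𝓝 y₀)),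
          limsup (fun n => f n (u n, v n) + g n (u n, v n)) atTop)
        ≤ (⨆ (v : ℕ → Y) (_ : Tendsto v atTop (𝓝 y₀)),
          limsup (fun n => f n (u n, v n)) atTop) + b := by
      intro u hu
      set S := ⨆ (v : ℕ → Y) (_ : Tendsto v atTop (𝓝 y₀)),
          limsup (fun n => f n (u n, v n)) atTop with hS
      calc (⨅ (v : ℕ → Y) (_ : Tendsto v atTop (𝓝 y₀)),
            limsup (fun n => f n (u n, v n) + g n (u n, v n)) atTop)
          ≤ ⨅ (v : ℕ → Y) (_ : Tendsto v atTop (𝓝 y₀)),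
            (S + limsup (fun n => g n (u n, v n)) atTop) := by
            refine iInf₂_mono fun v hv => ?_
            refine (my_limsup_add_le atTop _ _).trans (add_le_add_left ?_ _)
            exact le_iSup_of_le v (le_iSup_of_le hv le_rfl)
        _ = S + ⨅ (v : ℕ → Y) (_ : Tendsto v atTop (𝓝 y₀)),
            limsup (fun n => g n (u n, v n)) atTop := by
            simp_rw [ENNReal.add_iInf]
        _ ≤ S + b := by
            refine add_le_add_right ?_ S
            rw [← hB1]
            exact le_iSup_of_le u (le_iSup_of_le hu le_rfl)
    calc (⨅ (u : ℕ → X) (_ : Tendsto u atTop (𝓝 x₀)),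
          ⨅ (v : ℕ → Y) (_ : Tendsto v atTop (𝓝 y₀)),
            limsup (fun n => f n (u n, v n) + g n (u n, v n)) atTop)
        ≤ ⨅ (u : ℕ → X) (_ : Tendsto u atTop (𝓝 x₀)),
          ((⨆ (v : ℕ → Y) (_ : Tendsto v atTop (𝓝 y₀)),
            limsup (fun n => f n (u n, v n)) atTop) + b) :=
          iInf₂_mono fun u hu => step u hu
      _ = (⨅ (u : ℕ → X) (_ : Tendsto u atTop (𝓝 x₀)),
            ⨆ (v : ℕ → Y) (_ : Tendsto v atTop (𝓝 y₀)),
            limsup (fun n => f n (u n, v n)) atTop) + b := by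
          simp_rw [ENNReal.iInf_add]
      _ = a + b := by rw [hA1]
  exact ⟨le_antisymm hup (hlow.trans hmid), le_antisymm (hmid.trans hup) hlow⟩
end

section
/- Let X and Y be topological spaces, (E_n)_{n∈ℕ} a sequence of subsets of X × Y, and E_∞ ⊆ X × Y. Assume: (i) whenever xⁿ → x in X, yⁿ → y in Y, and (xⁿ,yⁿ) ∈ E_n for infinitely many n, then (x,y) ∈ E_∞; and (ii) whenever (x,y) ∈ E_∞ and xⁿ → x in X, there exists a sequence yⁿ → y in Y with (xⁿ,yⁿ) ∈ E_n for all sufficiently large n. Then for every (x,y) ∈ X × Y: the supremum over all sequences xⁿ → x of ( the infimum over all sequences yⁿ → y of limsup_{n→∞} 1_{E_n}(xⁿ,yⁿ) ) equals 1_{E_∞}(x,y), and the infimum over all sequences xⁿ → x of ( the infimum over all sequences yⁿ → y of liminf_{n→∞} 1_{E_n}(xⁿ,yⁿ) ) also equals 1_{E_∞}(x,y). -/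
open Filter Topology
open scoped ENNReal

open Classical in
/-- The `[0, +∞]`-valued indicator of a set: `0` on the set and `+∞` off it. -/
noncomputable def eIndicator {Z : Type*} (E : Set Z) (z : Z) : ℝ≥0∞ :=
  if z ∈ E then 0 else ⊤

/-- sequential Γ-convergence of indicator functions on a product.
Under conditions (i) and (ii) relating the sets `E n` and `E∞`, the sequential
Γ-limit (in the sense `(ℕ, X, Y⁻)`) of the indicators `1_{E n}` is `1_{E∞}`. -/
theorem gammaSeq_indicator {X Y : Type*} [TopologicalSpace X] [TopologicalSpace Y]
    (E : ℕ → Set (X × Y)) (Einf : Set (X × Y))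
    (h1 : ∀ (u : ℕ → X) (v : ℕ → Y) (x : X) (y : Y),
      Tendsto u atTop (𝓝 x) → Tendsto v atTop (𝓝 y) →
      (∃ᶠ n in atTop, (u n, v n) ∈ E n) → (x, y) ∈ Einf)
    (h2 : ∀ (x : X) (y : Y), (x, y) ∈ Einf → ∀ u : ℕ → X, Tendsto u atTop (𝓝 x) →
      ∃ v : ℕ → Y, Tendsto v atTop (𝓝 y) ∧ ∀ᶠ n in atTop, (u n, v n) ∈ E n) :
    ∀ (x : X) (y : Y),
      ((⨆ (u : ℕ → X) (_ : Tendsto u atTop (𝓝 x)),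
          ⨅ (v : ℕ → Y) (_ : Tendsto v atTop (𝓝 y)),
            limsup (fun n => eIndicator (E n) (u n, v n)) atTop)
        = eIndicator Einf (x, y)) ∧
      ((⨅ (u : ℕ → X) (_ : Tendsto u atTop (𝓝 x)),
          ⨅ (v : ℕ → Y) (_ : Tendsto v atTop (𝓝 y)),
            liminf (fun n => eIndicator (E n) (u n, v n)) atTop)
        = eIndicator Einf (x, y)) := by
  intro x y
  by_cases hxy : (x, y) ∈ Einf
  · have hval : eIndicator Einf (x, y) = 0 := by simp [eIndicator, hxy]
    rw [hval]
    constructor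
    · refine le_antisymm (iSup₂_le fun u hu => ?_) zero_le
      obtain ⟨v, hv, hev⟩ := h2 x y hxy u hu
      refine le_trans (iInf₂_le v hv) (le_of_eq ?_)
      calc limsup (fun n => eIndicator (E n) (u n, v n)) atTop
          = limsup (fun _ => (0 : ℝ≥0∞)) atTop := by
            apply limsup_congr
            filter_upwards [hev] with n hn
            simp [eIndicator, hn]
        _ = 0 := limsup_const 0
    · refine le_antisymm ?_ zero_le
      refine le_trans (iInf₂_le (fun _ => x) tendsto_const_nhds) ?_
      obtain ⟨v, hv, hev⟩ := h2 x y hxy (fun _ => x) tendsto_const_nhds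
      refine le_trans (iInf₂_le v hv) (le_of_eq ?_)
      calc liminf (fun n => eIndicator (E n) (x, v n)) atTop
          = liminf (fun _ => (0 : ℝ≥0∞)) atTop := by
            apply liminf_congr
            filter_upwards [hev] with n hn
            simp [eIndicator, hn]
        _ = 0 := liminf_const 0
  · have hval : eIndicator Einf (x, y) = ⊤ := by simp [eIndicator, hxy]
    rw [hval]
    constructor
    · refine le_antisymm le_top ?_
      refine le_trans ?_ (le_iSup₂ (fun _ => x) tendsto_const_nhds)
      refine le_iInf₂ fun v hv => ?_
      have hfreq : ∃ᶠ n in atTop, (x, v n) ∉ E n := by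
        by_contra h
        rw [Filter.not_frequently] at h
        simp only [not_not] at h
        exact hxy (h1 (fun _ => x) v x y tendsto_const_nhds hv h.frequently)
      have : ∃ᶠ n in atTop, (⊤ : ℝ≥0∞) ≤ eIndicator (E n) (x, v n) :=
        hfreq.mono fun n hn => le_of_eq (by simp [eIndicator, hn])
      exact le_limsup_of_frequently_le this (by isBoundedDefault)
    · refine le_antisymm le_top ?_
      refine le_iInf₂ fun u hu => le_iInf₂ fun v hv => ?_
      have hev : ∀ᶠ n in atTop, (u n, v n) ∉ E n := by
        by_contra h
        rw [Filter.not_eventually] at h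
        exact hxy (h1 u v x y hu hv (by simpa using h))
      refine le_of_eq ?_
      symm
      calc liminf (fun n => eIndicator (E n) (u n, v n)) atTop
          = liminf (fun _ => (⊤ : ℝ≥0∞)) atTop := by
            apply liminf_congr
            filter_upwards [hev] with n hn
            simp [eIndicator, hn]
        _ = ⊤ := liminf_const ⊤
end

section
/- Let X and Y be topological spaces, (J_n)_{n∈ℕ} a sequence of functions from X × Y to [0,+∞], J_∞ : X × Y → [0,+∞], (E_n)_{n∈ℕ} a sequence of subsets of X × Y, and E_∞ ⊆ X × Y. Assume that for every (x,y) ∈ X × Y: (A) the infimum over all sequences xⁿ → x of ( the supremum over all sequences yⁿ → y of limsup_{n→∞} J_n(xⁿ,yⁿ) ) and the infimum over all sequences xⁿ → x of ( the infimum over all sequences yⁿ → y of liminf_{n→∞} J_n(xⁿ,yⁿ) ) both equal J_∞(x,y); (B) the supremum over all sequences xⁿ → x of ( the infimum over all sequences yⁿ → y of limsup_{n→∞} 1_{E_n}(xⁿ,yⁿ) ) and the infimum over all sequences xⁿ → x of ( the infimum over all sequences yⁿ → y of liminf_{n→∞} 1_{E_n}(xⁿ,yⁿ) ) both equal 1_{E_∞}(x,y).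 Then J_n + 1_{E_n} sequentially Γ-converges to J_∞ + 1_{E_∞} on the product space: for every (x,y) ∈ X × Y, the infimum over all sequences (xⁿ,yⁿ) → (x,y) in X × Y of liminf_{n→∞} (J_n + 1_{E_n})(xⁿ,yⁿ) and the infimum over all such sequences of limsup_{n→∞} (J_n + 1_{E_n})(xⁿ,yⁿ) both equal J_∞(x,y) + 1_{E_∞}(x,y). -/
/-!
Liminf inequality: along any `w → (x, y)`, both coordinates converge, so the `inf-inf-liminf`
hypotheses bound `liminf J n (w n)` and `liminf 1_{E n}(w n)` from below, and liminf is
superadditive. Recovery sequence: for `(x, y) ∈ E∞` and any `u → x`, the `sup-inf` hypothesis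
on the indicators provides `v → y` with `(u n, v n) ∈ E n` eventually, along which
`J n + 1_{E n} = J n` eventually; so the `limsup` of the sum along `(u, v)` is at most the
`sup` over `v` in the `inf-sup` Γ-limit of `J`, and the infimum over `u` of the latter is `J∞`.
-/

open Filter Topology
open scoped ENNReal

theorem ENNReal.le_liminf_add {ι : Type*} {l : Filter ι} {u v : ι → ℝ≥0∞} :
    liminf u l + liminf v l ≤ liminf (u + v) l := by
  simp only [liminf_eq_iSup_iInf]
  refine ENNReal.biSup_add_biSup_le' ⟨_, univ_mem⟩ ⟨_, univ_mem⟩ fun s hs t ht => ?_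
  refine le_iSup₂_of_le (s ∩ t) (inter_mem hs ht) (le_iInf₂ fun a ha => ?_)
  exact add_le_add (iInf₂_le a ha.1) (iInf₂_le a ha.2)

theorem iInf_iInf_tendsto_prodMk_le {ι X Y α : Type*} [TopologicalSpace X]
    [TopologicalSpace Y] [CompleteLattice α] {l : Filter ι} (F : (ι → X × Y) → α) {x : X} {y : Y}
    {w : ι → X × Y} (hw : Tendsto w l (𝓝 (x, y))) :
    (⨅ (u : ι → X) (_ : Tendsto u l (𝓝 x)) (v : ι → Y) (_ : Tendsto v l (𝓝 y)),
      F fun n => (u n, v n)) ≤ F w :=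
  iInf₂_le_of_le (fun n => (w n).1) hw.fst_nhds <|
    iInf₂_le_of_le (fun n => (w n).2) hw.snd_nhds le_rfl

theorem iInf_liminf_eq_and_iInf_limsup_eq {S ι α : Type*} [CompleteLattice α]
    {l : Filter ι} [l.NeBot] {p : S → Prop} {f : S → ι → α} {a : α}
    (hle : ∀ s, p s → a ≤ liminf (f s) l) (hge : (⨅ (s : S) (_ : p s), limsup (f s) l) ≤ a) :
    (⨅ (s : S) (_ : p s), liminf (f s) l) = a ∧
      (⨅ (s : S) (_ : p s), limsup (f s) l) = a := by
  have hmono : (⨅ (s : S) (_ : p s), liminf (f s) l) ≤ ⨅ (s : S) (_ : p s), limsup (f s) l :=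
    iInf₂_mono fun _ _ => liminf_le_limsup
  exact ⟨le_antisymm (hmono.trans hge) (le_iInf₂ hle),
    le_antisymm hge (le_iInf₂ fun s hs => (hle s hs).trans liminf_le_limsup)⟩

section eIndicator

variable {Z : Type*} {E : Set Z} {z : Z}

@[simp]
theorem eIndicator_of_mem (h : z ∈ E) : eIndicator E z = 0 := if_pos h

@[simp]
theorem eIndicator_of_notMem (h : z ∉ E) : eIndicator E z = ⊤ := if_neg h

theorem eIndicator_lt_top_iff : eIndicator E z < ⊤ ↔ z ∈ E := by
  by_cases h : z ∈ E <;> simp [h]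

end eIndicator

theorem limsup_add_eIndicator_eq_of_limsup_lt_top {ι Z : Type*} {l : Filter ι}
    {g : ι → ℝ≥0∞} {E : ι → Set Z} {z : ι → Z}
    (h : limsup (fun i => eIndicator (E i) (z i)) l < ⊤) :
    limsup (fun i => g i + eIndicator (E i) (z i)) l = limsup g l := by
  refine limsup_congr ((eventually_lt_of_limsup_lt h).mono fun i hi => ?_)
  rw [eIndicator_of_mem (eIndicator_lt_top_iff.1 hi), add_zero]

theorem iInf_limsup_add_eIndicator_le {X Y : Type*} [TopologicalSpace X] [TopologicalSpace Y]
    (J : ℕ → X × Y → ℝ≥0∞) (E : ℕ → Set (X × Y)) {x : X} {y : Y} {u : ℕ → X}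
    (hu : Tendsto u atTop (𝓝 x))
    (hE : (⨅ (v : ℕ → Y) (_ : Tendsto v atTop (𝓝 y)),
      limsup (fun n => eIndicator (E n) (u n, v n)) atTop) < ⊤) :
    (⨅ (w : ℕ → X × Y) (_ : Tendsto w atTop (𝓝 (x, y))),
        limsup (fun n => J n (w n) + eIndicator (E n) (w n)) atTop) ≤
      ⨆ (v : ℕ → Y) (_ : Tendsto v atTop (𝓝 y)), limsup (fun n => J n (u n, v n)) atTop := by
  obtain ⟨v, hv, hEv⟩ : ∃ v, ∃ (_ : Tendsto v atTop (𝓝 y)),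
      limsup (fun n => eIndicator (E n) (u n, v n)) atTop < ⊤ := by
    simpa only [iInf_lt_iff] using hE
  calc (⨅ (w : ℕ → X × Y) (_ : Tendsto w atTop (𝓝 (x, y))),
        limsup (fun n => J n (w n) + eIndicator (E n) (w n)) atTop)
      ≤ limsup (fun n => J n (u n, v n) + eIndicator (E n) (u n, v n)) atTop :=
        iInf₂_le (fun n => (u n, v n)) (hu.prodMk_nhds hv)
    _ = limsup (fun n => J n (u n, v n)) atTop :=
        limsup_add_eIndicator_eq_of_limsup_lt_top hEv
    _ ≤ ⨆ (v : ℕ → Y) (_ : Tendsto v atTop (𝓝 y)), limsup (fun n => J n (u n, v n)) atTop :=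
        le_iSup₂_of_le v hv le_rfl

/-- Γ-convergence of `J n + 1_{E n}` on the product space.
If the mixed sequential Γ-limits of `J n` equal `J∞` and those of the indicators
`1_{E n}` equal `1_{E∞}` (in the stated senses), then `J n + 1_{E n}` sequentially
Γ-converges to `J∞ + 1_{E∞}` on `X × Y` with the product topology, for both the
`liminf` and the `limsup` variants. -/
theorem gammaSeq_add_indicator {X Y : Type*} [TopologicalSpace X] [TopologicalSpace Y]
    (J : ℕ → X × Y → ℝ≥0∞) (Jinf : X × Y → ℝ≥0∞)
    (E : ℕ → Set (X × Y)) (Einf : Set (X × Y))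
    (hA1 : ∀ (x : X) (y : Y),
      (⨅ (u : ℕ → X) (_ : Tendsto u atTop (𝓝 x)),
        ⨆ (v : ℕ → Y) (_ : Tendsto v atTop (𝓝 y)),
          limsup (fun n => J n (u n, v n)) atTop) = Jinf (x, y))
    (hA2 : ∀ (x : X) (y : Y),
      (⨅ (u : ℕ → X) (_ : Tendsto u atTop (𝓝 x)),
        ⨅ (v : ℕ → Y) (_ : Tendsto v atTop (𝓝 y)),
          liminf (fun n => J n (u n, v n)) atTop) = Jinf (x, y))
    (hB1 : ∀ (x : X) (y : Y),
      (⨆ (u : ℕ → X) (_ : Tendsto u atTop (𝓝 x)),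
        ⨅ (v : ℕ → Y) (_ : Tendsto v atTop (𝓝 y)),
          limsup (fun n => eIndicator (E n) (u n, v n)) atTop) = eIndicator Einf (x, y))
    (hB2 : ∀ (x : X) (y : Y),
      (⨅ (u : ℕ → X) (_ : Tendsto u atTop (𝓝 x)),
        ⨅ (v : ℕ → Y) (_ : Tendsto v atTop (𝓝 y)),
          liminf (fun n => eIndicator (E n) (u n, v n)) atTop) = eIndicator Einf (x, y)) :
    ∀ (x : X) (y : Y),
      ((⨅ (w : ℕ → X × Y) (_ : Tendsto w atTop (𝓝 (x, y))),
          liminf (fun n => J n (w n) + eIndicator (E n) (w n)) atTop)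
        = Jinf (x, y) + eIndicator Einf (x, y)) ∧
      ((⨅ (w : ℕ → X × Y) (_ : Tendsto w atTop (𝓝 (x, y))),
          limsup (fun n => J n (w n) + eIndicator (E n) (w n)) atTop)
        = Jinf (x, y) + eIndicator Einf (x, y)) := by
  intro x y
  refine iInf_liminf_eq_and_iInf_limsup_eq (fun w hw => ?_) ?_
  · calc Jinf (x, y) + eIndicator Einf (x, y)
        ≤ liminf (fun n => J n (w n)) atTop +
            liminf (fun n => eIndicator (E n) (w n)) atTop := by
          rw [← hA2 x y, ← hB2 x y]
          exact add_le_add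
            (iInf_iInf_tendsto_prodMk_le (fun w => liminf (fun n => J n (w n)) atTop) hw)
            (iInf_iInf_tendsto_prodMk_le
              (fun w => liminf (fun n => eIndicator (E n) (w n)) atTop) hw)
      _ ≤ _ := ENNReal.le_liminf_add
  · by_cases hxy : (x, y) ∈ Einf
    · rw [eIndicator_of_mem hxy, add_zero, ← hA1 x y]
      refine le_iInf₂ fun u hu => iInf_limsup_add_eIndicator_le J E hu ?_
      have hB : (⨅ (v : ℕ → Y) (_ : Tendsto v atTop (𝓝 y)),
          limsup (fun n => eIndicator (E n) (u n, v n)) atTop) ≤ 0 := by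
        rw [← eIndicator_of_mem hxy, ← hB1 x y]
        exact le_iSup₂_of_le u hu le_rfl
      exact hB.trans_lt ENNReal.zero_lt_top
    · simp [eIndicator_of_notMem hxy]
end

section
/- Discrete grid setting. Let p ∈ [1,∞), let ρ : Ω_h → ℝ satisfy Σ_{x∈Ω_h} ρ(x) = 0, let X_h = { ξ : Ω_h → ℝ : Σ_{x∈Ω_h} ξ(x) = 0 } and let Y_h be the set of fluxes satisfying the zero-flux boundary condition. Define J_h(ξ, m) = Σ_{x∈Ω_h} ( |m(x)|_p + |ξ(x)| ) h^d on X_h × Y_h, and for α > 0 define E^α = { (ξ, m) ∈ X_h × Y_h : div^h m − (1/α) ξ = ρ on Ω_h } and E^∞ = { (ξ, m) ∈ X_h × Y_h : div^h m = ρ on Ω_h }. Then for every sequence of positive reals α_k → +∞, the functionals J_h + 1_{E^{α_k}} Γ-converge to J_h + 1_{E^∞} on X_h × Y_h: for every (ξ, m) ∈ X_h × Y_h, the infimum over all sequences (ξ_k, m_k) ∈ X_h × Y_h converging to (ξ, m) of liminf_{k→∞} (J_h + 1_{E^{α_k}})(ξ_k, m_k) and the infimum over all such sequences of limsup_{k→∞}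 (J_h + 1_{E^{α_k}})(ξ_k, m_k) both equal (J_h + 1_{E^∞})(ξ, m), with values in [0,+∞]. -/
open Filter Topology
open scoped ENNReal

/-- Discrete divergence `div^h m (x) = ∑ i, (mᵢ(x) - mᵢ(x - eᵢ)) / h` on the grid
`{0, …, N}^d`, where the term `mᵢ(x - eᵢ)` is taken to be `0` when `xᵢ = 0`. -/
noncomputable def gridDiv (d N : ℕ) (h : ℝ)
    (m : (Fin d → Fin (N + 1)) → Fin d → ℝ) (x : Fin d → Fin (N + 1)) : ℝ :=
  (∑ i : Fin d, (m x i -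
    if (x i : ℕ) = 0 then 0
    else m (Function.update x i
      ⟨(x i : ℕ) - 1, lt_of_le_of_lt (Nat.sub_le _ _) (x i).isLt⟩) i)) / h

/-- The `ℓ_p` norm `|v|_p = (∑ i, |v i| ^ p) ^ (1/p)` of a vector `v : Fin d → ℝ`. -/
noncomputable def lpNorm (d : ℕ) (p : ℝ) (v : Fin d → ℝ) : ℝ :=
  (∑ i : Fin d, |v i| ^ p) ^ (1 / p)

/-- Membership in `X_h × Y_h`: the scalar field has zero mean and the flux
satisfies the zero-flux boundary condition. -/
def XYmem (d N : ℕ)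
    (z : ((Fin d → Fin (N + 1)) → ℝ) × ((Fin d → Fin (N + 1)) → Fin d → ℝ)) : Prop :=
  (∑ x : Fin d → Fin (N + 1), z.1 x = 0) ∧
  (∀ (x : Fin d → Fin (N + 1)) (i : Fin d), (x i : ℕ) = N → z.2 x i = 0)

/-- The discrete functional `J_h(ξ, m) = Σ_x (|m(x)|_p + |ξ(x)|) h^d`,
viewed with values in `[0, +∞]`. -/
noncomputable def Jh (d N : ℕ) (h p : ℝ)
    (z : ((Fin d → Fin (N + 1)) → ℝ) × ((Fin d → Fin (N + 1)) → Fin d → ℝ)) : ℝ≥0∞ :=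
  ENNReal.ofReal (∑ x : Fin d → Fin (N + 1), (lpNorm d p (z.2 x) + |z.1 x|) * h ^ d)

/-- The constraint set `E^α = {(ξ, m) ∈ X_h × Y_h : div^h m − (1/α) ξ = ρ}`. -/
def Ealpha (d N : ℕ) (h α : ℝ) (ρ : (Fin d → Fin (N + 1)) → ℝ) :
    Set (((Fin d → Fin (N + 1)) → ℝ) × ((Fin d → Fin (N + 1)) → Fin d → ℝ)) :=
  {z | XYmem d N z ∧ ∀ x : Fin d → Fin (N + 1),
    gridDiv d N h z.2 x - (1 / α) * z.1 x = ρ x}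

/-- The constraint set `E^∞ = {(ξ, m) ∈ X_h × Y_h : div^h m = ρ}`. -/
def Einfty (d N : ℕ) (h : ℝ) (ρ : (Fin d → Fin (N + 1)) → ℝ) :
    Set (((Fin d → Fin (N + 1)) → ℝ) × ((Fin d → Fin (N + 1)) → Fin d → ℝ)) :=
  {z | XYmem d N z ∧ ∀ x : Fin d → Fin (N + 1), gridDiv d N h z.2 x = ρ x}

/-- Partial average of `g` over the coordinates `≥ c`. -/
noncomputable def Vv (d N c : ℕ) (g : (Fin d → Fin (N + 1)) → ℝ) (x : Fin d → Fin (N + 1)) : ℝ :=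
  ((N + 1 : ℝ) ^ (d - c))⁻¹ *
    ∑ y : Fin d → Fin (N + 1), if ∀ j : Fin d, (j : ℕ) < c → y j = x j then g y else 0

lemma Vv_top (d N : ℕ) (g : (Fin d → Fin (N + 1)) → ℝ) (x) : Vv d N d g x = g x := by
  unfold Vv
  have h1 : ∀ y : Fin d → Fin (N+1), (∀ j : Fin d, (j:ℕ) < d → y j = x j) ↔ y = x := by
    intro y
    constructor
    · intro hy; funext j; exact hy j j.isLt
    · rintro rfl; exact fun _ _ => rfl
  simp only [h1]
  rw [Finset.sum_ite_eq' Finset.univ x g]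
  simp [Nat.sub_self]

lemma Vv_zero (d N : ℕ) (g : (Fin d → Fin (N + 1)) → ℝ)
    (hg : ∑ y : Fin d → Fin (N+1), g y = 0) (x) : Vv d N 0 g x = 0 := by
  unfold Vv
  simp [hg]

lemma Vv_update (d N c : ℕ) (g : (Fin d → Fin (N + 1)) → ℝ) (x) (i : Fin d)
    (hi : c ≤ (i:ℕ)) (t : Fin (N+1)) :
    Vv d N c g (Function.update x i t) = Vv d N c g x := by
  unfold Vv
  congr 1
  refine Finset.sum_congr rfl fun y _ => ?_
  have key : ∀ j : Fin d, (j:ℕ) < c → Function.update x i t j = x j := by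
    intro j hj
    have hji : j ≠ i := by
      intro e; rw [e] at hj; omega
    simp [Function.update_of_ne hji]
  exact if_congr ⟨fun hy j hj => (hy j hj).trans (key j hj),
    fun hy j hj => (hy j hj).trans (key j hj).symm⟩ rfl rfl

lemma Vv_avg (d N : ℕ) (c : Fin d) (g : (Fin d → Fin (N + 1)) → ℝ) (x) :
    ∑ t : Fin (N+1), Vv d N ((c:ℕ)+1) g (Function.update x c t)
      = (N+1 : ℝ) * Vv d N (c:ℕ) g x := by
  unfold Vv
  have claim : ∀ y : Fin d → Fin (N+1),
      (∑ t : Fin (N+1), if ∀ j : Fin d, (j:ℕ) < (c:ℕ)+1 → y j = Function.update x c t j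
        then g y else 0)
      = if ∀ j : Fin d, (j:ℕ) < (c:ℕ) → y j = x j then g y else 0 := by
    intro y
    have hP : ∀ t : Fin (N+1),
        (∀ j : Fin d, (j:ℕ) < (c:ℕ)+1 → y j = Function.update x c t j)
          ↔ ((∀ j : Fin d, (j:ℕ) < (c:ℕ) → y j = x j) ∧ t = y c) := by
      intro t
      constructor
      · intro hy
        refine ⟨fun j hj => ?_, ?_⟩
        · have hji : j ≠ c := by intro e; rw [e] at hj; omega
          have := hy j (by omega)
          rwa [Function.update_of_ne hji] at this
        · have := hy c (by omega)
          rw [Function.update_self] at this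
          exact this.symm
      · rintro ⟨h1, rfl⟩ j hj
        by_cases hjc : j = c
        · subst hjc; rw [Function.update_self]
        · rw [Function.update_of_ne hjc]
          refine h1 j ?_
          have : (j:ℕ) ≠ (c:ℕ) := fun e => hjc (Fin.ext e)
          omega
    simp only [hP]
    by_cases hQ : ∀ j : Fin d, (j:ℕ) < (c:ℕ) → y j = x j
    · rw [if_pos hQ, Finset.sum_congr rfl fun t _ => if_congr (and_iff_right hQ) rfl rfl,
        Finset.sum_ite_eq' Finset.univ (y c) (fun _ => g y)]
      simp
    · rw [if_neg hQ]
      exact Finset.sum_eq_zero fun t _ => if_neg fun hco => hQ hco.1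
  rw [← Finset.mul_sum, Finset.sum_comm]
  rw [Finset.sum_congr rfl fun y _ => claim y]
  have hc : (c:ℕ) < d := c.isLt
  have hd' : d - (c:ℕ) = (d - ((c:ℕ)+1)) + 1 := by omega
  have hN0 : (N+1:ℝ) ≠ 0 := by positivity
  set S := ∑ y : Fin d → Fin (N + 1), if ∀ j : Fin d, (j : ℕ) < (c:ℕ) → y j = x j then g y else 0 with hS
  rw [hd', pow_succ, mul_inv]
  field_simp

/-- A flux whose discrete divergence is `g` (for zero-mean `g`) and which
satisfies the zero-flux boundary condition. -/
noncomputable def recFlux (d N : ℕ) (h : ℝ) (g : (Fin d → Fin (N + 1)) → ℝ)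
    (x : Fin d → Fin (N + 1)) (i : Fin d) : ℝ :=
  h * ∑ t : Fin (N+1), if (t:ℕ) ≤ (x i : ℕ) then
    (Vv d N ((i:ℕ)+1) g (Function.update x i t) - Vv d N (i:ℕ) g x) else 0

lemma recFlux_bc (d N : ℕ) (h : ℝ) (g : (Fin d → Fin (N + 1)) → ℝ)
    (x : Fin d → Fin (N + 1)) (i : Fin d) (hx : (x i : ℕ) = N) :
    recFlux d N h g x i = 0 := by
  unfold recFlux
  have hle : ∀ t : Fin (N+1), (t:ℕ) ≤ (x i:ℕ) := by
    intro t; have := t.isLt; omega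
  rw [Finset.sum_congr rfl fun t _ => if_pos (hle t), Finset.sum_sub_distrib,
    Vv_avg, Finset.sum_const, Finset.card_univ, Fintype.card_fin, nsmul_eq_mul]
  push_cast
  ring

lemma recFlux_div (d N : ℕ) (h : ℝ) (hh : h ≠ 0) (g : (Fin d → Fin (N + 1)) → ℝ)
    (hg : ∑ y : Fin d → Fin (N+1), g y = 0) (x : Fin d → Fin (N + 1)) :
    gridDiv d N h (recFlux d N h g) x = g x := by
  unfold gridDiv
  have key : ∀ i : Fin d,
      (recFlux d N h g x i -
        if (x i : ℕ) = 0 then 0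
        else recFlux d N h g (Function.update x i
          ⟨(x i : ℕ) - 1, lt_of_le_of_lt (Nat.sub_le _ _) (x i).isLt⟩) i)
      = h * (Vv d N ((i:ℕ)+1) g x - Vv d N (i:ℕ) g x) := by
    intro i
    by_cases hx0 : (x i : ℕ) = 0
    · rw [if_pos hx0, sub_zero]
      unfold recFlux
      congr 1
      rw [Finset.sum_eq_single (x i)]
      · rw [if_pos le_rfl, Function.update_eq_self]
      · intro t _ ht
        refine if_neg fun hle => ht (Fin.ext ?_)
        omega
      · intro habs; exact absurd (Finset.mem_univ _) habs
    · rw [if_neg hx0]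
      unfold recFlux
      rw [← mul_sub, ← Finset.sum_sub_distrib]
      congr 1
      rw [Finset.sum_eq_single (x i)]
      · rw [if_pos, Function.update_eq_self, Function.update_self]
        · rw [if_neg (by simp; exact Fin.lt_def.mpr (by simp only [Fin.val_zero]; omega)), sub_zero]
        · exact le_rfl
      · intro t _ ht
        rw [Function.update_self, Function.update_idem,
          Vv_update d N (i:ℕ) g x i le_rfl]
        by_cases hle : (t:ℕ) ≤ (x i : ℕ)
        · have h2 : (t:ℕ) ≤ (x i : ℕ) - 1 := by
            have : (t:ℕ) ≠ (x i:ℕ) := fun e => ht (Fin.ext e)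
            omega
          rw [if_pos hle, if_pos h2, sub_self]
        · rw [if_neg hle, if_neg (fun h2 => hle (le_trans h2 (Nat.sub_le _ _))), sub_self]
      · intro habs; exact absurd (Finset.mem_univ _) habs
  rw [Finset.sum_congr rfl fun i _ => key i, ← Finset.mul_sum,
    mul_comm h, mul_div_assoc, div_self hh, mul_one]
  have tele : (∑ i : Fin d, (Vv d N ((i:ℕ)+1) g x - Vv d N (i:ℕ) g x))
      = Vv d N d g x - Vv d N 0 g x := by
    rw [Fin.sum_univ_eq_sum_range (fun c => Vv d N (c+1) g x - Vv d N c g x) d]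
    exact Finset.sum_range_sub (fun c => Vv d N c g x) d
  rw [tele, Vv_top, Vv_zero d N g hg, sub_zero]

lemma Jh_continuous (d N : ℕ) (h p : ℝ) (hp : 1 ≤ p) : Continuous (Jh d N h p) := by
  unfold Jh lpNorm
  refine ENNReal.continuous_ofReal.comp ?_
  refine continuous_finset_sum _ fun x _ => Continuous.mul (Continuous.add ?_ ?_) continuous_const
  · refine Continuous.rpow_const ?_ fun _ => Or.inr (by positivity)
    refine continuous_finset_sum _ fun i _ => ?_
    refine Continuous.rpow_const ?_ fun _ => Or.inr (by linarith)
    exact continuous_abs.comp ((continuous_apply i).comp ((continuous_apply x).comp continuous_snd))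
  · exact continuous_abs.comp ((continuous_apply x).comp continuous_fst)

lemma gridDiv_continuous (d N : ℕ) (h : ℝ) (x : Fin d → Fin (N + 1)) :
    Continuous fun mm : (Fin d → Fin (N+1)) → Fin d → ℝ => gridDiv d N h mm x := by
  unfold gridDiv
  refine Continuous.div_const (continuous_finset_sum _ fun i _ => ?_) h
  refine Continuous.sub ((continuous_apply i).comp (continuous_apply x)) ?_
  by_cases h0 : (x i : ℕ) = 0
  · simp only [if_pos h0]; exact continuous_const
  · simp only [if_neg h0]
    exact (continuous_apply i).comp (continuous_apply _)

lemma gridDiv_add_mul (d N : ℕ) (h c : ℝ)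
    (a b : (Fin d → Fin (N + 1)) → Fin d → ℝ) (x : Fin d → Fin (N + 1)) :
    gridDiv d N h (fun y i => a y i + c * b y i) x
      = gridDiv d N h a x + c * gridDiv d N h b x := by
  unfold gridDiv
  have e : (∑ i : Fin d, ((fun y i => a y i + c * b y i) x i -
      if (x i : ℕ) = 0 then 0
      else (fun y i => a y i + c * b y i) (Function.update x i
        ⟨(x i : ℕ) - 1, lt_of_le_of_lt (Nat.sub_le _ _) (x i).isLt⟩) i))
      = (∑ i : Fin d, (a x i - if (x i : ℕ) = 0 then 0
          else a (Function.update x i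
            ⟨(x i : ℕ) - 1, lt_of_le_of_lt (Nat.sub_le _ _) (x i).isLt⟩) i))
        + c * (∑ i : Fin d, (b x i - if (x i : ℕ) = 0 then 0
          else b (Function.update x i
            ⟨(x i : ℕ) - 1, lt_of_le_of_lt (Nat.sub_le _ _) (x i).isLt⟩) i)) := by
    rw [Finset.mul_sum, ← Finset.sum_add_distrib]
    refine Finset.sum_congr rfl fun i _ => ?_
    split_ifs <;> ring
  rw [e, add_div, mul_div_assoc]

lemma lower_bound (d N : ℕ) (h : ℝ) (p : ℝ) (hp : 1 ≤ p)
    (ρ : (Fin d → Fin (N + 1)) → ℝ)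
    (α : ℕ → ℝ) (hα : Tendsto α atTop atTop)
    (ξ : (Fin d → Fin (N + 1)) → ℝ) (m : (Fin d → Fin (N + 1)) → Fin d → ℝ)
    (hmem : XYmem d N (ξ, m))
    (w : ℕ → ((Fin d → Fin (N + 1)) → ℝ) × ((Fin d → Fin (N + 1)) → Fin d → ℝ))
    (hw : Tendsto w atTop (𝓝 (ξ, m))) :
    Jh d N h p (ξ, m) + eIndicator (Einfty d N h ρ) (ξ, m)
      ≤ liminf (fun k => Jh d N h p (w k) + eIndicator (Ealpha d N h (α k) ρ) (w k)) atTop := by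
  by_cases hz : (ξ, m) ∈ Einfty d N h ρ
  · have h1 : eIndicator (Einfty d N h ρ) (ξ, m) = 0 := by simp [eIndicator, hz]
    rw [h1, add_zero]
    have hJ : Tendsto (fun k => Jh d N h p (w k)) atTop (𝓝 (Jh d N h p (ξ, m))) :=
      ((Jh_continuous d N h p hp).tendsto (ξ, m)).comp hw
    calc Jh d N h p (ξ, m) = liminf (fun k => Jh d N h p (w k)) atTop := hJ.liminf_eq.symm
      _ ≤ _ := liminf_le_liminf (Eventually.of_forall fun k => le_self_add)
  · -- limit not feasible: eventually the sequence leaves `E^{α k}`, so liminf is ⊤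
    have h1 : eIndicator (Einfty d N h ρ) (ξ, m) = ⊤ := by simp [eIndicator, hz]
    have hev : ∀ᶠ k in atTop, w k ∉ Ealpha d N h (α k) ρ := by
      by_contra hcon
      rw [Filter.not_eventually] at hcon
      simp only [not_not] at hcon
      apply hz
      refine ⟨hmem, fun x => ?_⟩
      have hfreq : ∃ᶠ k in atTop,
          gridDiv d N h (w k).2 x - (1 / α k) * (w k).1 x = ρ x :=
        hcon.mono fun k hk => hk.2 x
      have h0 : Tendsto (fun k => (α k)⁻¹) atTop (𝓝 0) := hα.inv_tendsto_atTop
      have hdiv : Tendsto (fun k => gridDiv d N h (w k).2 x) atTop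
          (𝓝 (gridDiv d N h m x)) :=
        ((gridDiv_continuous d N h x).tendsto m).comp ((continuous_snd.tendsto (ξ, m)).comp hw)
      have hxi : Tendsto (fun k => (w k).1 x) atTop (𝓝 (ξ x)) :=
        ((continuous_apply x).tendsto ξ).comp ((continuous_fst.tendsto (ξ, m)).comp hw)
      have hcomb : Tendsto (fun k => gridDiv d N h (w k).2 x - (1 / α k) * (w k).1 x)
          atTop (𝓝 (gridDiv d N h m x)) := by
        have := hdiv.sub ((h0.mul hxi))
        simpa [one_div] using this
      exact tendsto_nhds_unique_of_frequently_eq hcomb tendsto_const_nhds hfreq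
    rw [h1]
    have : liminf (fun k => Jh d N h p (w k) + eIndicator (Ealpha d N h (α k) ρ) (w k)) atTop
        = (⊤ : ℝ≥0∞) := by
      have : ∀ᶠ k in atTop,
          Jh d N h p (w k) + eIndicator (Ealpha d N h (α k) ρ) (w k) = (⊤ : ℝ≥0∞) := by
        refine hev.mono fun k hk => ?_
        simp [eIndicator, hk]
      rw [liminf_congr this, liminf_const]
    rw [this]
    exact le_top

lemma recovery (d N : ℕ) (h : ℝ) (hh : 0 < h) (p : ℝ) (hp : 1 ≤ p)
    (ρ : (Fin d → Fin (N + 1)) → ℝ)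
    (α : ℕ → ℝ) (hαpos : ∀ k, 0 < α k) (hα : Tendsto α atTop atTop)
    (ξ : (Fin d → Fin (N + 1)) → ℝ) (m : (Fin d → Fin (N + 1)) → Fin d → ℝ)
    (hmem : XYmem d N (ξ, m)) :
    ∃ w : ℕ → ((Fin d → Fin (N + 1)) → ℝ) × ((Fin d → Fin (N + 1)) → Fin d → ℝ),
      (∀ k, XYmem d N (w k)) ∧ Tendsto w atTop (𝓝 (ξ, m)) ∧
      limsup (fun k => Jh d N h p (w k) + eIndicator (Ealpha d N h (α k) ρ) (w k)) atTop
        ≤ Jh d N h p (ξ, m) + eIndicator (Einfty d N h ρ) (ξ, m) := by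
  by_cases hz : (ξ, m) ∈ Einfty d N h ρ
  · -- recovery sequence: perturb the flux
    set m' := recFlux d N h ξ with hm'
    have hdivm' : ∀ x, gridDiv d N h m' x = ξ x :=
      fun x => recFlux_div d N h hh.ne' ξ hmem.1 x
    set w : ℕ → ((Fin d → Fin (N + 1)) → ℝ) × ((Fin d → Fin (N + 1)) → Fin d → ℝ) :=
      fun k => (ξ, fun y i => m y i + (1 / α k) * m' y i) with hwdef
    have hXY : ∀ k, XYmem d N (w k) := by
      intro k
      refine ⟨hmem.1, fun x i hx => ?_⟩
      simp only [hwdef]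
      have h1 : m x i = 0 := hmem.2 x i hx
      have h2 : m' x i = 0 := recFlux_bc d N h ξ x i hx
      rw [h1, h2]
      ring
    have h0 : Tendsto (fun k => 1 / α k) atTop (𝓝 0) := by
      simp only [one_div]; exact hα.inv_tendsto_atTop
    have hconv : Tendsto w atTop (𝓝 (ξ, m)) := by
      refine Tendsto.prodMk_nhds tendsto_const_nhds ?_
      rw [tendsto_pi_nhds]
      intro x
      rw [tendsto_pi_nhds]
      intro i
      have := (tendsto_const_nhds (x := m x i) (f := atTop)).add (h0.mul_const (m' x i))
      simpa using this
    have hin : ∀ k, w k ∈ Ealpha d N h (α k) ρ := by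
      intro k
      refine ⟨hXY k, fun x => ?_⟩
      have : gridDiv d N h (w k).2 x
          = gridDiv d N h m x + (1 / α k) * gridDiv d N h m' x :=
        gridDiv_add_mul d N h (1 / α k) m m' x
      rw [this, hdivm' x, hz.2 x]
      ring
    refine ⟨w, hXY, hconv, ?_⟩
    have hJ : Tendsto (fun k => Jh d N h p (w k)) atTop (𝓝 (Jh d N h p (ξ, m))) :=
      ((Jh_continuous d N h p hp).tendsto (ξ, m)).comp hconv
    have heq : ∀ k, Jh d N h p (w k) + eIndicator (Ealpha d N h (α k) ρ) (w k)
        = Jh d N h p (w k) := by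
      intro k; simp [eIndicator, hin k]
    calc limsup (fun k => Jh d N h p (w k) + eIndicator (Ealpha d N h (α k) ρ) (w k)) atTop
        = limsup (fun k => Jh d N h p (w k)) atTop := by
          exact limsup_congr (Eventually.of_forall heq)
      _ = Jh d N h p (ξ, m) := hJ.limsup_eq
      _ ≤ _ := le_self_add
  · refine ⟨fun _ => (ξ, m), fun _ => hmem, tendsto_const_nhds, ?_⟩
    have : eIndicator (Einfty d N h ρ) (ξ, m) = ⊤ := by simp [eIndicator, hz]
    rw [this]
    simp

/-- Γ-convergence of the discrete UOT functionals to the discrete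
OT functional.  For every sequence of positive reals `α k → +∞` and every
`(ξ, m) ∈ X_h × Y_h`, the infimum over all sequences in `X_h × Y_h` converging to
`(ξ, m)` of `liminf_k (J_h + 1_{E^{α k}})` and of `limsup_k (J_h + 1_{E^{α k}})`
both equal `(J_h + 1_{E^∞})(ξ, m)`. -/
theorem discrete_gammaConvergence (d N : ℕ) (hd : 1 ≤ d) (hN : 1 ≤ N)
    (h : ℝ) (hh : 0 < h) (p : ℝ) (hp : 1 ≤ p)
    (ρ : (Fin d → Fin (N + 1)) → ℝ) (hρ : ∑ x : Fin d → Fin (N + 1), ρ x = 0)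
    (α : ℕ → ℝ) (hαpos : ∀ k, 0 < α k) (hα : Tendsto α atTop atTop)
    (ξ : (Fin d → Fin (N + 1)) → ℝ) (m : (Fin d → Fin (N + 1)) → Fin d → ℝ)
    (hmem : XYmem d N (ξ, m)) :
    ((⨅ (w : ℕ → ((Fin d → Fin (N + 1)) → ℝ) × ((Fin d → Fin (N + 1)) → Fin d → ℝ))
        (_ : ∀ k, XYmem d N (w k)) (_ : Tendsto w atTop (𝓝 (ξ, m))),
        liminf (fun k => Jh d N h p (w k) + eIndicator (Ealpha d N h (α k) ρ) (w k))
          atTop)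
      = Jh d N h p (ξ, m) + eIndicator (Einfty d N h ρ) (ξ, m)) ∧
    ((⨅ (w : ℕ → ((Fin d → Fin (N + 1)) → ℝ) × ((Fin d → Fin (N + 1)) → Fin d → ℝ))
        (_ : ∀ k, XYmem d N (w k)) (_ : Tendsto w atTop (𝓝 (ξ, m))),
        limsup (fun k => Jh d N h p (w k) + eIndicator (Ealpha d N h (α k) ρ) (w k))
          atTop)
      = Jh d N h p (ξ, m) + eIndicator (Einfty d N h ρ) (ξ, m)) := by
  obtain ⟨w₀, hw₀1, hw₀2, hw₀3⟩ := recovery d N h hh p hp ρ α hαpos hα ξ m hmem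
  constructor
  · refine le_antisymm ?_ ?_
    · refine iInf_le_of_le w₀ (iInf_le_of_le hw₀1 (iInf_le_of_le hw₀2 ?_))
      exact le_trans liminf_le_limsup hw₀3
    · exact le_iInf fun w => le_iInf fun h1 => le_iInf fun h2 =>
        lower_bound d N h p hp ρ α hα ξ m hmem w h2
  · refine le_antisymm ?_ ?_
    · exact iInf_le_of_le w₀ (iInf_le_of_le hw₀1 (iInf_le_of_le hw₀2 hw₀3))
    · exact le_iInf fun w => le_iInf fun h1 => le_iInf fun h2 =>
        le_trans (lower_bound d N h p hp ρ α hα ξ m hmem w h2) liminf_le_limsup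
end

section
/- Discrete grid setting with L = N·h. Let p ∈ [1,∞), let ρ⁰, ρ¹ : Ω_h → ℝ with Σ_{x∈Ω_h} ρ⁰(x) = Σ_{x∈Ω_h} ρ¹(x), and set ρ = ρ⁰ − ρ¹. Suppose α > dL/2 and that (m*, η*), where m* is a flux satisfying the zero-flux boundary condition and η* : Ω_h → ℝ, minimizes Σ_{x∈Ω_h} ( |m(x)|_p + α|η(x)| ) over all pairs (m, η) such that m is a flux satisfying the zero-flux boundary condition, η : Ω_h → ℝ, and div^h m − η = ρ on Ω_h. Then η*(x) = 0 for every x ∈ Ω_h, and consequently m* minimizes Σ_{x∈Ω_h} |m(x)|_p over all fluxes m satisfying the zero-flux boundary condition with div^h m = ρ on Ω_h. -/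
open Filter Topology

namespace UOTAux

open Finset

/-- Signed indicator of a 1-dimensional oriented segment. -/
noncomputable def seg (h : ℝ) (a b t : ℕ) : ℝ :=
  if a ≤ t ∧ t < b then h else if b ≤ t ∧ t < a then -h else 0

lemma seg_diff (h : ℝ) (a b t : ℕ) :
    seg h a b t - (if t = 0 then 0 else seg h a b (t - 1)) =
      h * ((if t = a then (1 : ℝ) else 0) - (if t = b then 1 else 0)) := by
  unfold seg
  split_ifs <;> first | ring1 | (exfalso; omega)

lemma abs_seg (h : ℝ) (hh : 0 ≤ h) (a b t : ℕ) :
    |seg h a b t| =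
      (if a ≤ t ∧ t < b then h else 0) + (if b ≤ t ∧ t < a then h else 0) := by
  unfold seg
  split_ifs <;> first | (exfalso; omega) | simp [abs_of_nonneg hh]

lemma seg_last (h : ℝ) {a b M : ℕ} (ha : a ≤ M) (hb : b ≤ M) : seg h a b M = 0 := by
  unfold seg
  split_ifs <;> first | rfl | (exfalso; omega)

/-- Unit flux along the axis-monotone staircase path from `x` to `c`. -/
noncomputable def pathFlux (d N : ℕ) (h : ℝ) (x c : Fin d → Fin (N + 1))
    (y : Fin d → Fin (N + 1)) (i : Fin d) : ℝ :=
  (if (∀ j : Fin d, (j : ℕ) < (i : ℕ) → y j = c j) ∧ (∀ j : Fin d, (i : ℕ) < (j : ℕ) → y j = x j)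
    then (1 : ℝ) else 0) * seg h (x i) (c i) (y i)

lemma pathFlux_bc (d N : ℕ) (h : ℝ) (x c y : Fin d → Fin (N + 1)) (i : Fin d)
    (hy : (y i : ℕ) = N) : pathFlux d N h x c y i = 0 := by
  unfold pathFlux
  rw [hy, seg_last h (Nat.lt_succ_iff.mp (x i).isLt) (Nat.lt_succ_iff.mp (c i).isLt),
    mul_zero]

lemma ite_mul_ite (P Q : Prop) [Decidable P] [Decidable Q] :
    (if P then (1 : ℝ) else 0) * (if Q then (1 : ℝ) else 0) = if P ∧ Q then 1 else 0 := by
  split_ifs <;> first | ring1 | tauto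

lemma gridDiv_pathFlux (d N : ℕ) (h : ℝ) (hh : h ≠ 0) (x c y : Fin d → Fin (N + 1)) :
    gridDiv d N h (pathFlux d N h x c) y =
      (if y = x then (1 : ℝ) else 0) - (if y = c then 1 else 0) := by
  classical
  set A : ℕ → ℝ := fun k =>
    if (∀ j : Fin d, ((j : ℕ) < k → y j = c j) ∧ (k ≤ (j : ℕ) → y j = x j))
      then (1 : ℝ) else 0 with hA
  have key : ∀ i : Fin d,
      pathFlux d N h x c y i -
        (if (y i : ℕ) = 0 then 0 else
          pathFlux d N h x c (Function.update y i
            ⟨(y i : ℕ) - 1, lt_of_le_of_lt (Nat.sub_le _ _) (y i).isLt⟩) i) =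
      h * (A (i : ℕ) - A ((i : ℕ) + 1)) := by
    intro i
    have hupd : ∀ (u : Fin (N + 1)) (j : Fin d), j ≠ i → Function.update y i u j = y j :=
      fun u j hj => Function.update_of_ne hj _ _
    have hne : ∀ j : Fin d, (j : ℕ) ≠ (i : ℕ) → j ≠ i := by
      intro j hj hji; exact hj (by rw [hji])
    have hpf : ∀ u : Fin (N + 1),
        pathFlux d N h x c (Function.update y i u) i =
        (if (∀ j : Fin d, (j : ℕ) < (i : ℕ) → y j = c j) ∧ (∀ j : Fin d, (i : ℕ) < (j : ℕ) → y j = x j)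
          then (1 : ℝ) else 0) * seg h (x i) (c i) (u : ℕ) := by
      intro u
      unfold pathFlux
      rw [Function.update_self]
      congr 1
      apply if_congr _ rfl rfl
      constructor
      · rintro ⟨h1, h2⟩
        exact ⟨fun j hj => by rw [← hupd u j (hne j (Nat.ne_of_lt hj))]; exact h1 j hj,
               fun j hj => by rw [← hupd u j (hne j (Nat.ne_of_gt hj))]; exact h2 j hj⟩
      · rintro ⟨h1, h2⟩
        exact ⟨fun j hj => by rw [hupd u j (hne j (Nat.ne_of_lt hj))]; exact h1 j hj,
               fun j hj => by rw [hupd u j (hne j (Nat.ne_of_gt hj))]; exact h2 j hj⟩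
    rw [hpf]
    unfold pathFlux
    set I := (if (∀ j : Fin d, (j : ℕ) < (i : ℕ) → y j = c j) ∧
        (∀ j : Fin d, (i : ℕ) < (j : ℕ) → y j = x j) then (1 : ℝ) else 0) with hI
    have hpull : (if (y i : ℕ) = 0 then (0 : ℝ)
          else I * seg h (x i) (c i) ((y i : ℕ) - 1)) =
        I * (if (y i : ℕ) = 0 then 0 else seg h (x i) (c i) ((y i : ℕ) - 1)) := by
      split_ifs <;> ring1
    rw [hpull, ← mul_sub, seg_diff]
    have hAi : I * (if ((y i : ℕ) = (x i : ℕ)) then (1 : ℝ) else 0) = A (i : ℕ) := by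
      rw [hI, ite_mul_ite, hA]
      apply if_congr _ rfl rfl
      constructor
      · rintro ⟨⟨h1, h2⟩, h3⟩ j
        refine ⟨fun hj => h1 j hj, fun hj => ?_⟩
        rcases Nat.eq_or_lt_of_le hj with he | hlt
        · obtain rfl : i = j := Fin.val_injective he
          exact Fin.val_injective h3
        · exact h2 j hlt
      · intro H
        exact ⟨⟨fun j hj => (H j).1 hj, fun j hj => (H j).2 (le_of_lt hj)⟩,
          congrArg Fin.val ((H i).2 le_rfl)⟩
    have hAi1 : I * (if ((y i : ℕ) = (c i : ℕ)) then (1 : ℝ) else 0) = A ((i : ℕ) + 1) := by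
      rw [hI, ite_mul_ite, hA]
      apply if_congr _ rfl rfl
      constructor
      · rintro ⟨⟨h1, h2⟩, h3⟩ j
        refine ⟨fun hj => ?_, fun hj => h2 j hj⟩
        rcases Nat.lt_succ_iff_lt_or_eq.mp hj with hlt | he
        · exact h1 j hlt
        · obtain rfl : i = j := Fin.val_injective he.symm
          exact Fin.val_injective h3
      · intro H
        exact ⟨⟨fun j hj => (H j).1 (Nat.lt_succ_of_lt hj), fun j hj => (H j).2 hj⟩,
          congrArg Fin.val ((H i).1 (Nat.lt_succ_self _))⟩
    rw [← hAi, ← hAi1]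
    ring
  have hmain : gridDiv d N h (pathFlux d N h x c) y =
      (∑ i : Fin d, h * (A (i : ℕ) - A ((i : ℕ) + 1))) / h := by
    unfold gridDiv
    congr 1
    exact Finset.sum_congr rfl fun i _ => key i
  rw [hmain, ← Finset.mul_sum, mul_div_cancel_left₀ _ hh]
  rw [Fin.sum_univ_eq_sum_range (fun k => A k - A (k + 1)) d, Finset.sum_range_sub' A d]
  have h0 : A 0 = (if y = x then (1 : ℝ) else 0) := by
    rw [hA]
    apply if_congr _ rfl rfl
    constructor
    · intro H; exact funext fun j => (H j).2 (Nat.zero_le _)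
    · intro H j
      exact ⟨fun hj => absurd hj (Nat.not_lt_zero _), fun _ => congrFun H j⟩
  have hd : A d = (if y = c then (1 : ℝ) else 0) := by
    rw [hA]
    apply if_congr _ rfl rfl
    constructor
    · intro H; exact funext fun j => (H j).1 j.isLt
    · intro H j
      exact ⟨fun _ => congrFun H j, fun hj => absurd hj (Nat.not_le.mpr j.isLt)⟩
  rw [h0, hd]

lemma sum_ind_Ico (a b M : ℕ) (hb : b ≤ M) (r : ℝ) :
    ∑ k ∈ Finset.range M, (if a ≤ k ∧ k < b then r else 0) = ((b - a : ℕ) : ℝ) * r := by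
  classical
  have hfil : (Finset.range M).filter (fun k => a ≤ k ∧ k < b) = Finset.Ico a b := by
    ext k; simp only [Finset.mem_filter, Finset.mem_range, Finset.mem_Ico]; omega
  rw [← Finset.sum_filter, hfil, Finset.sum_const, Nat.card_Ico, nsmul_eq_mul]

lemma sum_abs_pathFlux (d N : ℕ) (h : ℝ) (hh : 0 ≤ h) (x c : Fin d → Fin (N + 1))
    (i : Fin d) :
    ∑ y : Fin d → Fin (N + 1), |pathFlux d N h x c y i| =
      h * ((((c i : ℕ) - (x i : ℕ)) + ((x i : ℕ) - (c i : ℕ)) : ℕ) : ℝ) := by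
  classical
  set f : Fin d → Fin (N + 1) → ℝ := fun j b =>
    if (j : ℕ) < (i : ℕ) then (if b = c j then 1 else 0)
    else if (i : ℕ) < (j : ℕ) then (if b = x j then 1 else 0)
    else |seg h (x i) (c i) (b : ℕ)| with hf
  have step1 : ∀ y : Fin d → Fin (N + 1),
      |pathFlux d N h x c y i| = ∏ j : Fin d, f j (y j) := by
    intro y
    unfold pathFlux
    by_cases hC : (∀ j : Fin d, (j : ℕ) < (i : ℕ) → y j = c j) ∧
        (∀ j : Fin d, (i : ℕ) < (j : ℕ) → y j = x j)
    · rw [if_pos hC, one_mul]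
      rw [Finset.prod_eq_single i]
      · rw [hf]; simp
      · intro j _ hji
        have h2 : (j : ℕ) < (i : ℕ) ∨ (i : ℕ) < (j : ℕ) := by
          rcases Nat.lt_trichotomy (j : ℕ) (i : ℕ) with hlt | he | hgt
          · exact Or.inl hlt
          · exact absurd (Fin.val_injective he) hji
          · exact Or.inr hgt
        rcases h2 with hj | hj
        · rw [hf]; simp [hj, hC.1 j hj]
        · rw [hf]; simp [Nat.lt_asymm hj, hj, hC.2 j hj]
      · intro hni; exact absurd (Finset.mem_univ i) hni
    · rw [if_neg hC, zero_mul, abs_zero]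
      rcases not_and_or.mp hC with hP | hP
      · push_neg at hP
        obtain ⟨j, hj, hne⟩ := hP
        refine (Finset.prod_eq_zero (Finset.mem_univ j) ?_).symm
        rw [hf]; simp [hj, hne]
      · push_neg at hP
        obtain ⟨j, hj, hne⟩ := hP
        refine (Finset.prod_eq_zero (Finset.mem_univ j) ?_).symm
        rw [hf]; simp [Nat.lt_asymm hj, hj, hne]
  calc ∑ y : Fin d → Fin (N + 1), |pathFlux d N h x c y i|
      = ∑ y : Fin d → Fin (N + 1), ∏ j : Fin d, f j (y j) :=
        Finset.sum_congr rfl fun y _ => step1 y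
    _ = ∑ y ∈ Fintype.piFinset (fun _ : Fin d => (Finset.univ : Finset (Fin (N + 1)))),
          ∏ j : Fin d, f j (y j) := by rw [Fintype.piFinset_univ]
    _ = ∏ j : Fin d, ∑ b : Fin (N + 1), f j b := (Finset.prod_univ_sum _ _).symm
    _ = h * ((((c i : ℕ) - (x i : ℕ)) + ((x i : ℕ) - (c i : ℕ)) : ℕ) : ℝ) := by
        rw [Finset.prod_eq_single i]
        · have : ∀ b : Fin (N + 1), f i b = |seg h (x i) (c i) (b : ℕ)| := by
            intro b; rw [hf]; simp
          rw [Finset.sum_congr rfl fun b _ => this b]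
          rw [Fin.sum_univ_eq_sum_range (fun k => |seg h (x i) (c i) k|) (N + 1)]
          have habs : ∀ k, |seg h (x i) (c i) k| =
              (if (x i : ℕ) ≤ k ∧ k < (c i : ℕ) then h else 0) +
              (if (c i : ℕ) ≤ k ∧ k < (x i : ℕ) then h else 0) :=
            fun k => abs_seg h hh _ _ k
          rw [Finset.sum_congr rfl fun k _ => habs k, Finset.sum_add_distrib,
            sum_ind_Ico _ _ _ (le_of_lt (c i).isLt) _,
            sum_ind_Ico _ _ _ (le_of_lt (x i).isLt) _]
          push_cast
          ring
        · intro j _ hji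
          have : (j : ℕ) < (i : ℕ) ∨ (i : ℕ) < (j : ℕ) := by
            rcases Nat.lt_trichotomy (j : ℕ) (i : ℕ) with hlt | he | hgt
            · exact Or.inl hlt
            · exact absurd (Fin.val_injective he) hji
            · exact Or.inr hgt
          rcases this with hj | hj
          · rw [hf]; simp [hj]
          · rw [hf]; simp [Nat.lt_asymm hj, hj]
        · intro hni; exact absurd (Finset.mem_univ i) hni


lemma gridDiv_add (d N : ℕ) (h : ℝ) (F G : (Fin d → Fin (N + 1)) → Fin d → ℝ)
    (y : Fin d → Fin (N + 1)) :
    gridDiv d N h (fun z i => F z i + G z i) y = gridDiv d N h F y + gridDiv d N h G y := by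
  unfold gridDiv
  rw [← add_div]
  congr 1
  rw [← Finset.sum_add_distrib]
  refine Finset.sum_congr rfl fun i _ => ?_
  split_ifs <;> ring

lemma gridDiv_smul (d N : ℕ) (h : ℝ) (a : ℝ) (F : (Fin d → Fin (N + 1)) → Fin d → ℝ)
    (y : Fin d → Fin (N + 1)) :
    gridDiv d N h (fun z i => a * F z i) y = a * gridDiv d N h F y := by
  unfold gridDiv
  rw [← mul_div_assoc]
  congr 1
  rw [Finset.mul_sum]
  refine Finset.sum_congr rfl fun i _ => ?_
  beta_reduce
  split_ifs <;> ring

lemma gridDiv_zero (d N : ℕ) (h : ℝ) (y : Fin d → Fin (N + 1)) :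
    gridDiv d N h (fun _ _ => (0 : ℝ)) y = 0 := by
  unfold gridDiv
  simp

lemma gridDiv_finsum {ι : Type*} (d N : ℕ) (h : ℝ) (s : Finset ι)
    (F : ι → (Fin d → Fin (N + 1)) → Fin d → ℝ) (y : Fin d → Fin (N + 1)) :
    gridDiv d N h (fun z i => ∑ x ∈ s, F x z i) y = ∑ x ∈ s, gridDiv d N h (F x) y := by
  classical
  induction s using Finset.cons_induction with
  | empty => simpa using gridDiv_zero d N h y
  | cons a s ha ih =>
      rw [Finset.sum_cons]
      have : (fun z i => ∑ x ∈ Finset.cons a s ha, F x z i) =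
          (fun z i => F a z i + ∑ x ∈ s, F x z i) := by
        funext z i; rw [Finset.sum_cons]
      rw [this, gridDiv_add, ih]

lemma sum_gridDiv_eq_zero (d N : ℕ) (h : ℝ) (m : (Fin d → Fin (N + 1)) → Fin d → ℝ)
    (hbc : ∀ (x : Fin d → Fin (N + 1)) (i : Fin d), (x i : ℕ) = N → m x i = 0) :
    ∑ x : Fin d → Fin (N + 1), gridDiv d N h m x = 0 := by
  classical
  unfold gridDiv
  rw [← Finset.sum_div]
  rw [Finset.sum_comm]
  have hzero : ∀ i : Fin d,
      (∑ x : Fin d → Fin (N + 1), (m x i -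
        if (x i : ℕ) = 0 then 0
        else m (Function.update x i
          ⟨(x i : ℕ) - 1, lt_of_le_of_lt (Nat.sub_le _ _) (x i).isLt⟩) i)) = 0 := by
    intro i
    rw [Finset.sum_sub_distrib]
    have hsecond : (∑ x : Fin d → Fin (N + 1),
        (if (x i : ℕ) = 0 then 0
        else m (Function.update x i
          ⟨(x i : ℕ) - 1, lt_of_le_of_lt (Nat.sub_le _ _) (x i).isLt⟩) i)) =
        ∑ x ∈ Finset.univ.filter (fun x : Fin d → Fin (N + 1) => ¬ (x i : ℕ) = 0),
          m (Function.update x i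
            ⟨(x i : ℕ) - 1, lt_of_le_of_lt (Nat.sub_le _ _) (x i).isLt⟩) i := by
      rw [Finset.sum_filter]
      refine Finset.sum_congr rfl fun x _ => ?_
      split_ifs <;> first | rfl | tauto
    rw [hsecond]
    have hbij : (∑ x ∈ Finset.univ.filter (fun x : Fin d → Fin (N + 1) => ¬ (x i : ℕ) = 0),
          m (Function.update x i
            ⟨(x i : ℕ) - 1, lt_of_le_of_lt (Nat.sub_le _ _) (x i).isLt⟩) i) =
        ∑ x ∈ Finset.univ.filter (fun x : Fin d → Fin (N + 1) => ¬ (x i : ℕ) = N), m x i := by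
      refine Finset.sum_nbij'
        (fun x => Function.update x i
          ⟨(x i : ℕ) - 1, lt_of_le_of_lt (Nat.sub_le _ _) (x i).isLt⟩)
        (fun x => Function.update x i
          ⟨min ((x i : ℕ) + 1) N, by omega⟩) ?_ ?_ ?_ ?_ ?_
      · intro x hx
        simp only [Finset.mem_filter, Finset.mem_univ, true_and] at hx ⊢
        rw [Function.update_self]
        have hlt := (x i).isLt
        show ¬ (x i : ℕ) - 1 = N
        omega
      · intro x hx
        simp only [Finset.mem_filter, Finset.mem_univ, true_and] at hx ⊢
        rw [Function.update_self]
        show ¬ min ((x i : ℕ) + 1) N = 0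
        omega
      · intro x hx
        simp only [Finset.mem_filter, Finset.mem_univ, true_and] at hx
        funext j
        by_cases hji : j = i
        · subst hji
          have hlt := (x j).isLt
          beta_reduce
          rw [Function.update_self]
          refine Fin.ext ?_
          show min (((Function.update x j
            ⟨(x j : ℕ) - 1, lt_of_le_of_lt (Nat.sub_le _ _) (x j).isLt⟩) j : ℕ) + 1) N
            = (x j : ℕ)
          rw [Function.update_self]
          show min (((x j : ℕ) - 1) + 1) N = (x j : ℕ)
          omega
        · beta_reduce
          rw [Function.update_of_ne hji, Function.update_of_ne hji]
      · intro x hx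
        simp only [Finset.mem_filter, Finset.mem_univ, true_and] at hx
        funext j
        by_cases hji : j = i
        · subst hji
          have hlt := (x j).isLt
          beta_reduce
          rw [Function.update_self]
          refine Fin.ext ?_
          show (((Function.update x j ⟨min ((x j : ℕ) + 1) N, by omega⟩) j : ℕ)) - 1
            = (x j : ℕ)
          rw [Function.update_self]
          show min ((x j : ℕ) + 1) N - 1 = (x j : ℕ)
          omega
        · beta_reduce
          rw [Function.update_of_ne hji, Function.update_of_ne hji]
      · intro x hx
        rfl
    rw [hbij]
    rw [← Finset.sum_filter_add_sum_filter_not Finset.univ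
      (fun x : Fin d → Fin (N + 1) => ¬ (x i : ℕ) = N) (fun x => m x i)]
    have hlast : (∑ x ∈ Finset.univ.filter
        (fun x : Fin d → Fin (N + 1) => ¬ ¬ (x i : ℕ) = N), m x i) = 0 := by
      refine Finset.sum_eq_zero fun x hx => ?_
      simp only [Finset.mem_filter, Finset.mem_univ, true_and, not_not] at hx
      exact hbc x i hx
    rw [hlast]
    ring
  rw [Finset.sum_congr rfl fun i _ => hzero i]
  simp


lemma exists_transport (d N : ℕ) (h : ℝ) (hh : 0 < h)
    (g : (Fin d → Fin (N + 1)) → ℝ)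
    (hg : ∑ x : Fin d → Fin (N + 1), g x = 0) :
    ∃ w : (Fin d → Fin (N + 1)) → Fin d → ℝ,
      (∀ (y : Fin d → Fin (N + 1)) (i : Fin d), (y i : ℕ) = N → w y i = 0) ∧
      (∀ y : Fin d → Fin (N + 1), gridDiv d N h w y = g y) ∧
      ∑ y : Fin d → Fin (N + 1), ∑ i : Fin d, |w y i| ≤
        ((d : ℝ) * (N * h) / 2) * ∑ y : Fin d → Fin (N + 1), |g y| := by
  classical
  set c1 : Fin (N + 1) := ⟨N / 2, by omega⟩ with hc1
  set c2 : Fin (N + 1) := ⟨N - N / 2, by omega⟩ with hc2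
  set C1 : Fin d → Fin (N + 1) := fun _ => c1 with hC1
  set C2 : Fin d → Fin (N + 1) := fun _ => c2 with hC2
  refine ⟨fun y i => ∑ x : Fin d → Fin (N + 1),
      (g x / 2) * (pathFlux d N h x C1 y i + pathFlux d N h x C2 y i), ?_, ?_, ?_⟩
  · intro y i hy
    refine Finset.sum_eq_zero fun x _ => ?_
    rw [pathFlux_bc d N h x C1 y i hy, pathFlux_bc d N h x C2 y i hy]
    ring
  · intro y
    rw [gridDiv_finsum d N h Finset.univ
      (fun x => fun z i => (g x / 2) * (pathFlux d N h x C1 z i + pathFlux d N h x C2 z i)) y]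
    have heach : ∀ x : Fin d → Fin (N + 1),
        gridDiv d N h
          (fun z i => (g x / 2) * (pathFlux d N h x C1 z i + pathFlux d N h x C2 z i)) y =
        (g x / 2) * (((if y = x then (1:ℝ) else 0) - (if y = C1 then 1 else 0)) +
          ((if y = x then (1:ℝ) else 0) - (if y = C2 then 1 else 0))) := by
      intro x
      rw [gridDiv_smul d N h (g x / 2)
        (fun z i => pathFlux d N h x C1 z i + pathFlux d N h x C2 z i) y]
      congr 1
      rw [gridDiv_add d N h (pathFlux d N h x C1) (pathFlux d N h x C2) y,
        gridDiv_pathFlux d N h (ne_of_gt hh) x C1 y,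
        gridDiv_pathFlux d N h (ne_of_gt hh) x C2 y]
    rw [Finset.sum_congr rfl fun x _ => heach x]
    have hsplit : ∀ x : Fin d → Fin (N + 1),
        (g x / 2) * (((if y = x then (1:ℝ) else 0) - (if y = C1 then 1 else 0)) +
          ((if y = x then (1:ℝ) else 0) - (if y = C2 then 1 else 0))) =
        (if y = x then g x else 0) -
          g x * (((if y = C1 then (1:ℝ) else 0) + (if y = C2 then 1 else 0)) / 2) := by
      intro x
      split_ifs <;> ring
    rw [Finset.sum_congr rfl fun x _ => hsplit x, Finset.sum_sub_distrib]
    rw [Finset.sum_ite_eq Finset.univ y g]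
    rw [← Finset.sum_mul, hg]
    simp
  · -- cost bound
    have habs : ∀ (y : Fin d → Fin (N + 1)) (i : Fin d),
        |∑ x : Fin d → Fin (N + 1),
          (g x / 2) * (pathFlux d N h x C1 y i + pathFlux d N h x C2 y i)| ≤
        ∑ x : Fin d → Fin (N + 1),
          (|g x| / 2) * (|pathFlux d N h x C1 y i| + |pathFlux d N h x C2 y i|) := by
      intro y i
      refine le_trans (Finset.abs_sum_le_sum_abs _ _) (Finset.sum_le_sum fun x _ => ?_)
      rw [abs_mul, abs_div]
      have h2 : |(2:ℝ)| = 2 := by norm_num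
      rw [h2]
      have := abs_add_le (pathFlux d N h x C1 y i) (pathFlux d N h x C2 y i)
      have hgx : 0 ≤ |g x| / 2 := by positivity
      calc |g x| / 2 * |pathFlux d N h x C1 y i + pathFlux d N h x C2 y i|
          ≤ |g x| / 2 * (|pathFlux d N h x C1 y i| + |pathFlux d N h x C2 y i|) :=
            mul_le_mul_of_nonneg_left this hgx
        _ = (|g x| / 2) * (|pathFlux d N h x C1 y i| + |pathFlux d N h x C2 y i|) := by ring
    calc ∑ y : Fin d → Fin (N + 1), ∑ i : Fin d,
          |∑ x : Fin d → Fin (N + 1),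
            (g x / 2) * (pathFlux d N h x C1 y i + pathFlux d N h x C2 y i)|
        ≤ ∑ y : Fin d → Fin (N + 1), ∑ i : Fin d, ∑ x : Fin d → Fin (N + 1),
            (|g x| / 2) * (|pathFlux d N h x C1 y i| + |pathFlux d N h x C2 y i|) :=
          Finset.sum_le_sum fun y _ => Finset.sum_le_sum fun i _ => habs y i
      _ = ∑ x : Fin d → Fin (N + 1), ∑ i : Fin d, ∑ y : Fin d → Fin (N + 1),
            (|g x| / 2) * (|pathFlux d N h x C1 y i| + |pathFlux d N h x C2 y i|) := by
          calc ∑ y : Fin d → Fin (N + 1), ∑ i : Fin d, ∑ x : Fin d → Fin (N + 1),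
                (|g x| / 2) * (|pathFlux d N h x C1 y i| + |pathFlux d N h x C2 y i|)
              = ∑ y : Fin d → Fin (N + 1), ∑ x : Fin d → Fin (N + 1), ∑ i : Fin d,
                (|g x| / 2) * (|pathFlux d N h x C1 y i| + |pathFlux d N h x C2 y i|) :=
                Finset.sum_congr rfl fun y _ => Finset.sum_comm
            _ = ∑ x : Fin d → Fin (N + 1), ∑ y : Fin d → Fin (N + 1), ∑ i : Fin d,
                (|g x| / 2) * (|pathFlux d N h x C1 y i| + |pathFlux d N h x C2 y i|) :=
                Finset.sum_comm
            _ = ∑ x : Fin d → Fin (N + 1), ∑ i : Fin d, ∑ y : Fin d → Fin (N + 1),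
                (|g x| / 2) * (|pathFlux d N h x C1 y i| + |pathFlux d N h x C2 y i|) :=
                Finset.sum_congr rfl fun x _ => Finset.sum_comm
      _ ≤ ∑ x : Fin d → Fin (N + 1), |g x| * ((d : ℝ) * (N * h) / 2) := by
          refine Finset.sum_le_sum fun x _ => ?_
          have hcost : ∀ i : Fin d, ∑ y : Fin d → Fin (N + 1),
              (|g x| / 2) * (|pathFlux d N h x C1 y i| + |pathFlux d N h x C2 y i|) ≤
              (|g x| / 2) * (h * N) := by
            intro i
            rw [← Finset.mul_sum, Finset.sum_add_distrib,
              sum_abs_pathFlux d N h (le_of_lt hh) x C1 i,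
              sum_abs_pathFlux d N h (le_of_lt hh) x C2 i]
            refine mul_le_mul_of_nonneg_left ?_ (by positivity)
            rw [← mul_add, ← Nat.cast_add]
            have hnat : (((C1 i : ℕ) - (x i : ℕ)) + ((x i : ℕ) - (C1 i : ℕ))) +
                (((C2 i : ℕ) - (x i : ℕ)) + ((x i : ℕ) - (C2 i : ℕ))) ≤ N := by
              have hx := (x i).isLt
              show ((N / 2 - (x i : ℕ)) + ((x i : ℕ) - N / 2)) +
                (((N - N / 2) - (x i : ℕ)) + ((x i : ℕ) - (N - N / 2))) ≤ N
              omega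
            exact mul_le_mul_of_nonneg_left (by exact_mod_cast hnat) (le_of_lt hh)
          calc ∑ i : Fin d, ∑ y : Fin d → Fin (N + 1),
                (|g x| / 2) * (|pathFlux d N h x C1 y i| + |pathFlux d N h x C2 y i|)
              ≤ ∑ i : Fin d, (|g x| / 2) * (h * N) :=
                Finset.sum_le_sum fun i _ => hcost i
            _ = |g x| * ((d : ℝ) * (N * h) / 2) := by
                rw [Finset.sum_const, Finset.card_univ, Fintype.card_fin, nsmul_eq_mul]
                ring
      _ = ((d : ℝ) * (N * h) / 2) * ∑ y : Fin d → Fin (N + 1), |g y| := by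
          rw [← Finset.sum_mul, mul_comm]


lemma lpNorm_add_le (d : ℕ) {p : ℝ} (hp : 1 ≤ p) (u v : Fin d → ℝ) :
    lpNorm d p (fun i => u i + v i) ≤ lpNorm d p u + lpNorm d p v := by
  unfold lpNorm
  exact Real.Lp_add_le Finset.univ u v hp

lemma lpNorm_le_sum_abs (d : ℕ) {p : ℝ} (hp : 1 ≤ p) (v : Fin d → ℝ) :
    lpNorm d p v ≤ ∑ i : Fin d, |v i| := by
  unfold lpNorm
  have hp0 : 0 < p := lt_of_lt_of_le zero_lt_one hp
  set S := ∑ i : Fin d, |v i| with hS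
  have hS0 : 0 ≤ S := Finset.sum_nonneg fun i _ => abs_nonneg _
  rcases eq_or_lt_of_le hS0 with hz | hpos
  · have hall : ∀ i : Fin d, |v i| = 0 := by
      intro i
      have := (Finset.sum_eq_zero_iff_of_nonneg
        (fun i (_ : i ∈ Finset.univ) => abs_nonneg (v i))).mp hz.symm i (Finset.mem_univ i)
      exact this
    have : (∑ i : Fin d, |v i| ^ p) = 0 := by
      refine Finset.sum_eq_zero fun i _ => ?_
      rw [hall i]
      exact Real.zero_rpow (ne_of_gt hp0)
    rw [this, ← hz]
    rw [Real.zero_rpow (by positivity)]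
  · have hterm : ∀ i : Fin d, |v i| ^ p ≤ |v i| * S ^ (p - 1) := by
      intro i
      rcases eq_or_lt_of_le (abs_nonneg (v i)) with hvz | hvpos
      · rw [← hvz, Real.zero_rpow (ne_of_gt hp0), zero_mul]
      · have h1 : |v i| ^ p = |v i| * |v i| ^ (p - 1) := by
          rw [← Real.rpow_one_add' (le_of_lt hvpos) (by intro hc; linarith)]
          · ring_nf
        rw [h1]
        refine mul_le_mul_of_nonneg_left ?_ (abs_nonneg _)
        exact Real.rpow_le_rpow (abs_nonneg _)
          (Finset.single_le_sum (fun i _ => abs_nonneg (v i)) (Finset.mem_univ i))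
          (by linarith)
    have hsum : (∑ i : Fin d, |v i| ^ p) ≤ S ^ p := by
      calc (∑ i : Fin d, |v i| ^ p) ≤ ∑ i : Fin d, |v i| * S ^ (p - 1) :=
            Finset.sum_le_sum fun i _ => hterm i
        _ = S * S ^ (p - 1) := by rw [← Finset.sum_mul]
        _ = S ^ p := by
            rw [← Real.rpow_one_add' (le_of_lt hpos) (by intro hc; linarith)]
            ring_nf
    calc (∑ i : Fin d, |v i| ^ p) ^ (1 / p)
        ≤ (S ^ p) ^ (1 / p) :=
          Real.rpow_le_rpow (Finset.sum_nonneg fun i _ =>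
            Real.rpow_nonneg (abs_nonneg _) _) hsum (by positivity)
      _ = S := by
          rw [← Real.rpow_mul (le_of_lt hpos), mul_one_div, div_self (ne_of_gt hp0),
            Real.rpow_one]

lemma lpNorm_nonneg (d : ℕ) (p : ℝ) (v : Fin d → ℝ) : 0 ≤ lpNorm d p v := by
  unfold lpNorm
  exact Real.rpow_nonneg
    (Finset.sum_nonneg fun i _ => Real.rpow_nonneg (abs_nonneg _) _) _

end UOTAux

/-- finite convergence of discrete UOT to discrete OT.
With `L = N·h`, if `α > d·L/2` and `(m*, η*)` minimizes the discrete unbalanced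
optimal transport functional `Σ_x (|m(x)|_p + α|η(x)|)` subject to the zero-flux
boundary condition and `div^h m − η = ρ⁰ − ρ¹`, where `ρ⁰` and `ρ¹` have equal
total mass, then `η* ≡ 0` and `m*` minimizes the discrete optimal transport
functional `Σ_x |m(x)|_p` subject to `div^h m = ρ⁰ − ρ¹`. -/
theorem discrete_UOT_finite_convergence (d N : ℕ) (hd : 1 ≤ d) (hN : 1 ≤ N)
    (h : ℝ) (hh : 0 < h) (p : ℝ) (hp : 1 ≤ p)
    (ρ₀ ρ₁ : (Fin d → Fin (N + 1)) → ℝ)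
    (hmass : ∑ x : Fin d → Fin (N + 1), ρ₀ x = ∑ x : Fin d → Fin (N + 1), ρ₁ x)
    (α : ℝ) (hα : (d : ℝ) * (N * h) / 2 < α)
    (mstar : (Fin d → Fin (N + 1)) → Fin d → ℝ)
    (ηstar : (Fin d → Fin (N + 1)) → ℝ)
    (hbc : ∀ (x : Fin d → Fin (N + 1)) (i : Fin d), (x i : ℕ) = N → mstar x i = 0)
    (hfeas : ∀ x : Fin d → Fin (N + 1),
      gridDiv d N h mstar x - ηstar x = ρ₀ x - ρ₁ x)
    (hmin : ∀ (m : (Fin d → Fin (N + 1)) → Fin d → ℝ) (η : (Fin d → Fin (N + 1)) → ℝ),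
      (∀ (x : Fin d → Fin (N + 1)) (i : Fin d), (x i : ℕ) = N → m x i = 0) →
      (∀ x : Fin d → Fin (N + 1), gridDiv d N h m x - η x = ρ₀ x - ρ₁ x) →
      ∑ x : Fin d → Fin (N + 1), (lpNorm d p (mstar x) + α * |ηstar x|) ≤
        ∑ x : Fin d → Fin (N + 1), (lpNorm d p (m x) + α * |η x|)) :
    (∀ x : Fin d → Fin (N + 1), ηstar x = 0) ∧
    ∀ m : (Fin d → Fin (N + 1)) → Fin d → ℝ,
      (∀ (x : Fin d → Fin (N + 1)) (i : Fin d), (x i : ℕ) = N → m x i = 0) →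
      (∀ x : Fin d → Fin (N + 1), gridDiv d N h m x = ρ₀ x - ρ₁ x) →
      ∑ x : Fin d → Fin (N + 1), lpNorm d p (mstar x) ≤
        ∑ x : Fin d → Fin (N + 1), lpNorm d p (m x) := by
  classical
  have hh' : h ≠ 0 := ne_of_gt hh
  have hdiv0 : ∑ x : Fin d → Fin (N + 1), gridDiv d N h mstar x = 0 :=
    UOTAux.sum_gridDiv_eq_zero d N h mstar hbc
  have hηsum : ∑ x : Fin d → Fin (N + 1), ηstar x = 0 := by
    have hx : ∀ x : Fin d → Fin (N + 1),
        ηstar x = gridDiv d N h mstar x - (ρ₀ x - ρ₁ x) := by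
      intro x; have := hfeas x; linarith
    rw [Finset.sum_congr rfl fun x _ => hx x, Finset.sum_sub_distrib, hdiv0,
      Finset.sum_sub_distrib, hmass]
    ring
  obtain ⟨w, hwbc, hwdiv, hwcost⟩ := UOTAux.exists_transport d N h hh
    (fun x => -ηstar x) (by rw [Finset.sum_neg_distrib, hηsum]; ring)
  set m' : (Fin d → Fin (N + 1)) → Fin d → ℝ := fun y i => mstar y i + w y i with hm'
  have hm'bc : ∀ (y : Fin d → Fin (N + 1)) (i : Fin d), (y i : ℕ) = N → m' y i = 0 := by
    intro y i hy
    show mstar y i + w y i = 0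
    rw [hbc y i hy, hwbc y i hy, add_zero]
  have hm'feas : ∀ y : Fin d → Fin (N + 1),
      gridDiv d N h m' y - (fun _ : Fin d → Fin (N + 1) => (0:ℝ)) y = ρ₀ y - ρ₁ y := by
    intro y
    have hdivm' : gridDiv d N h m' y = gridDiv d N h mstar y + gridDiv d N h w y :=
      UOTAux.gridDiv_add d N h mstar w y
    have h1 := hfeas y
    have h2 := hwdiv y
    show gridDiv d N h m' y - 0 = ρ₀ y - ρ₁ y
    rw [sub_zero, hdivm', h2]
    linarith
  have hcomp := hmin m' (fun _ => 0) hm'bc hm'feas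
  have hL : ∑ x : Fin d → Fin (N + 1), (lpNorm d p (mstar x) + α * |ηstar x|) =
      (∑ x : Fin d → Fin (N + 1), lpNorm d p (mstar x)) +
        α * ∑ x : Fin d → Fin (N + 1), |ηstar x| := by
    rw [Finset.sum_add_distrib, Finset.mul_sum]
  have hR : ∑ x : Fin d → Fin (N + 1),
      (lpNorm d p (m' x) + α * |(fun _ : Fin d → Fin (N + 1) => (0:ℝ)) x|) =
      ∑ x : Fin d → Fin (N + 1), lpNorm d p (m' x) := by
    simp
  have hRle : ∑ x : Fin d → Fin (N + 1), lpNorm d p (m' x) ≤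
      (∑ x : Fin d → Fin (N + 1), lpNorm d p (mstar x)) +
        ∑ x : Fin d → Fin (N + 1), ∑ i : Fin d, |w x i| := by
    rw [← Finset.sum_add_distrib]
    refine Finset.sum_le_sum fun x _ => ?_
    calc lpNorm d p (m' x) ≤ lpNorm d p (mstar x) + lpNorm d p (w x) :=
          UOTAux.lpNorm_add_le d hp (mstar x) (w x)
      _ ≤ lpNorm d p (mstar x) + ∑ i : Fin d, |w x i| :=
          add_le_add (le_refl _) (UOTAux.lpNorm_le_sum_abs d hp (w x))
  have habs : ∑ x : Fin d → Fin (N + 1), |(fun x => -ηstar x) x| =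
      ∑ x : Fin d → Fin (N + 1), |ηstar x| := by simp
  have hkey : α * ∑ x : Fin d → Fin (N + 1), |ηstar x| ≤
      ((d : ℝ) * (N * h) / 2) * ∑ x : Fin d → Fin (N + 1), |ηstar x| := by
    have h1 := hcomp
    rw [hL, hR] at h1
    have h2 := le_trans h1 hRle
    have h3 := hwcost
    rw [habs] at h3
    linarith
  have hsum_abs_nonneg : 0 ≤ ∑ x : Fin d → Fin (N + 1), |ηstar x| :=
    Finset.sum_nonneg fun x _ => abs_nonneg _
  have hzero : ∑ x : Fin d → Fin (N + 1), |ηstar x| = 0 := by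
    by_contra hne
    have hpos : 0 < ∑ x : Fin d → Fin (N + 1), |ηstar x| :=
      lt_of_le_of_ne hsum_abs_nonneg (Ne.symm hne)
    nlinarith [hα, hkey]
  have hηzero : ∀ x : Fin d → Fin (N + 1), ηstar x = 0 := by
    intro x
    have := (Finset.sum_eq_zero_iff_of_nonneg
      fun x (_ : x ∈ Finset.univ) => abs_nonneg (ηstar x)).mp hzero x (Finset.mem_univ x)
    exact abs_eq_zero.mp this
  refine ⟨hηzero, ?_⟩
  intro m hmbc hmdiv
  have hm := hmin m (fun _ => 0) hmbc (fun y => by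
    show gridDiv d N h m y - 0 = ρ₀ y - ρ₁ y
    rw [sub_zero]; exact hmdiv y)
  calc ∑ x : Fin d → Fin (N + 1), lpNorm d p (mstar x)
      = ∑ x : Fin d → Fin (N + 1), (lpNorm d p (mstar x) + α * |ηstar x|) := by
        refine Finset.sum_congr rfl fun x _ => ?_
        rw [hηzero x]; simp
    _ ≤ ∑ x : Fin d → Fin (N + 1),
          (lpNorm d p (m x) + α * |(fun _ : Fin d → Fin (N + 1) => (0:ℝ)) x|) := hm
    _ = ∑ x : Fin d → Fin (N + 1), lpNorm d p (m x) := by simp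
end

section
/- Discrete grid setting. For every ξ : Ω_h → ℝ with Σ_{x∈Ω_h} ξ(x) = 0, there exists a flux m : Ω_h → ℝ^d satisfying the zero-flux boundary condition such that div^h m(x) = ξ(x) for every x ∈ Ω_h. In other words, the discrete divergence operator, restricted to fluxes with the zero-flux boundary condition, maps onto the space of mean-zero scalar fields on the grid. -/
open Filter Topology
open Fin.NatCast

namespace GridDivAux

/-- Partial tail sum: sum of `ξ y` over `y` agreeing with `x` on the first `k`
coordinates. -/
noncomputable def R (d N : ℕ) (ξ : (Fin d → Fin (N + 1)) → ℝ) (k : ℕ)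
    (x : Fin d → Fin (N + 1)) : ℝ :=
  ∑ y : Fin d → Fin (N + 1), if ∀ j : Fin d, (j : ℕ) < k → y j = x j then ξ y else 0

lemma R_zero (d N : ℕ) (ξ : (Fin d → Fin (N + 1)) → ℝ) (x : Fin d → Fin (N + 1)) :
    R d N ξ 0 x = ∑ y : Fin d → Fin (N + 1), ξ y := by
  simp [R]

lemma R_d (d N : ℕ) (ξ : (Fin d → Fin (N + 1)) → ℝ) (x : Fin d → Fin (N + 1)) :
    R d N ξ d x = ξ x := by
  have key : ∀ y : Fin d → Fin (N + 1),
      (∀ j : Fin d, (j : ℕ) < d → y j = x j) ↔ y = x := by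
    intro y
    constructor
    · intro hy; funext j; exact hy j j.isLt
    · rintro rfl; intro j _; rfl
  rw [R, Finset.sum_congr rfl (fun y _ => if_congr (key y) rfl rfl)]
  simp

lemma R_update (d N : ℕ) (ξ : (Fin d → Fin (N + 1)) → ℝ) (k : ℕ) (i : Fin d)
    (hk : k ≤ (i : ℕ)) (x : Fin d → Fin (N + 1)) (s : Fin (N + 1)) :
    R d N ξ k (Function.update x i s) = R d N ξ k x := by
  apply Finset.sum_congr rfl
  intro y _
  apply if_congr _ rfl rfl
  constructor <;> intro hy j hj
  · have hji : j ≠ i := by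
      intro hji; rw [hji] at hj; omega
    have := hy j hj
    rwa [Function.update_of_ne hji] at this
  · have hji : j ≠ i := by
      intro hji; rw [hji] at hj; omega
    rw [Function.update_of_ne hji]
    exact hy j hj

lemma R_sum (d N : ℕ) (ξ : (Fin d → Fin (N + 1)) → ℝ) (i : Fin d)
    (x : Fin d → Fin (N + 1)) :
    ∑ s : Fin (N + 1), R d N ξ ((i : ℕ) + 1) (Function.update x i s)
      = R d N ξ i x := by
  unfold R
  rw [Finset.sum_comm]
  apply Finset.sum_congr rfl
  intro y _
  have key : ∀ s : Fin (N + 1),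
      (∀ j : Fin d, (j : ℕ) < (i : ℕ) + 1 → y j = Function.update x i s j) ↔
        ((∀ j : Fin d, (j : ℕ) < (i : ℕ) → y j = x j) ∧ y i = s) := by
    intro s
    constructor
    · intro hy
      refine ⟨fun j hj => ?_, ?_⟩
      · have hji : j ≠ i := by intro hji; rw [hji] at hj; omega
        have := hy j (by omega)
        rwa [Function.update_of_ne hji] at this
      · simpa using hy i (by omega)
    · rintro ⟨h1, h2⟩ j hj
      by_cases hji : j = i
      · subst hji; simpa using h2
      · rw [Function.update_of_ne hji]
        have : (j : ℕ) ≠ (i : ℕ) := fun hv => hji (Fin.ext hv)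
        exact h1 j (by omega)
  rw [Finset.sum_congr rfl (fun s _ => by rw [if_congr (key s) rfl rfl, ite_and])]
  rcases Classical.em (∀ j : Fin d, (j : ℕ) < (i : ℕ) → y j = x j) with hP | hP
  · rw [if_pos hP, Finset.sum_congr rfl (fun s _ => if_pos hP), Finset.sum_ite_eq]
    exact if_pos (Finset.mem_univ _)
  · rw [if_neg hP, Finset.sum_congr rfl (fun s _ => if_neg hP), Finset.sum_const,
      smul_zero]

end GridDivAux

/-- For every mean-zero scalar field `ξ` on the grid `{0, …, N}^d`
there is a flux `m` satisfying the zero-flux boundary condition whose discrete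
divergence is `ξ`: the discrete divergence maps onto the mean-zero fields. -/
theorem gridDiv_surjective (d N : ℕ) (hd : 1 ≤ d) (hN : 1 ≤ N)
    (h : ℝ) (hh : 0 < h)
    (ξ : (Fin d → Fin (N + 1)) → ℝ) (hξ : ∑ x : Fin d → Fin (N + 1), ξ x = 0) :
    ∃ m : (Fin d → Fin (N + 1)) → Fin d → ℝ,
      (∀ (x : Fin d → Fin (N + 1)) (i : Fin d), (x i : ℕ) = N → m x i = 0) ∧
      ∀ x : Fin d → Fin (N + 1), gridDiv d N h m x = ξ x := by
  classical
  open GridDivAux in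
  set S : ℝ := (N : ℝ) + 1 with hS
  have hS0 : S ≠ 0 := by positivity
  -- the flux
  set m : (Fin d → Fin (N + 1)) → Fin d → ℝ := fun x i =>
    (h / S ^ (d - 1 - (i : ℕ))) * ∑ t ∈ Finset.range ((x i : ℕ) + 1),
      (R d N ξ ((i : ℕ) + 1) (Function.update x i (t : Fin (N + 1)))
        - R d N ξ i x / S) with hm
  refine ⟨m, ?_, ?_⟩
  · -- boundary condition
    intro x i hxi
    have hsum : ∑ t ∈ Finset.range (N + 1),
        R d N ξ ((i : ℕ) + 1) (Function.update x i (t : Fin (N + 1)))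
          = R d N ξ i x := by
      rw [← R_sum d N ξ i x, ← Fin.sum_univ_eq_sum_range]
      apply Finset.sum_congr rfl
      intro s _
      rw [Fin.cast_val_eq_self]
    simp only [hm, hxi]
    rw [Finset.sum_sub_distrib, hsum, Finset.sum_const, Finset.card_range]
    have : ((N : ℝ) + 1) * (R d N ξ (↑i) x / S) = R d N ξ (↑i) x := by
      rw [hS]; field_simp
    rw [nsmul_eq_mul]
    push_cast
    rw [this, sub_self, mul_zero]
  · -- divergence
    intro x
    have key : ∀ i : Fin d,
        (m x i - if (x i : ℕ) = 0 then 0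
          else m (Function.update x i
            ⟨(x i : ℕ) - 1, lt_of_le_of_lt (Nat.sub_le _ _) (x i).isLt⟩) i)
        = (h / S ^ (d - 1 - (i : ℕ))) *
            (R d N ξ ((i : ℕ) + 1) x - R d N ξ i x / S) := by
      intro i
      have hx_upd : Function.update x i (((x i : ℕ) : Fin (N + 1))) = x := by
        rw [Fin.cast_val_eq_self, Function.update_eq_self]
      by_cases h0 : (x i : ℕ) = 0
      · simp only [h0, if_true, sub_zero]
        simp only [hm, h0]
        rw [Finset.sum_range_one]
        rw [show ((0 : ℕ) : Fin (N + 1)) = x i by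
          apply Fin.ext; simp [h0.symm]]
        rw [Function.update_eq_self]
      · simp only [h0, if_false]
        set x' : Fin d → Fin (N + 1) := Function.update x i
          ⟨(x i : ℕ) - 1, lt_of_le_of_lt (Nat.sub_le _ _) (x i).isLt⟩ with hx'
        have hx'i : (x' i : ℕ) = (x i : ℕ) - 1 := by
          rw [hx', Function.update_self]
        have hupd : ∀ t : Fin (N + 1),
            Function.update x' i t = Function.update x i t := by
          intro t; rw [hx', Function.update_idem]
        have hRix' : R d N ξ i x' = R d N ξ i x := by
          rw [hx']; exact R_update d N ξ i i le_rfl x _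
        have hrange : (x' i : ℕ) + 1 = (x i : ℕ) := by omega
        have hmx' : m x' i = (h / S ^ (d - 1 - (i : ℕ))) *
            ∑ t ∈ Finset.range ((x i : ℕ)),
              (R d N ξ ((i : ℕ) + 1) (Function.update x i (t : Fin (N + 1)))
                - R d N ξ i x / S) := by
          simp only [hm]
          rw [hrange]
          congr 1
          exact Finset.sum_congr rfl (fun t _ => by rw [hupd, hRix'])
        have hmx : m x i = (h / S ^ (d - 1 - (i : ℕ))) *
            ∑ t ∈ Finset.range ((x i : ℕ) + 1),
              (R d N ξ ((i : ℕ) + 1) (Function.update x i (t : Fin (N + 1)))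
                - R d N ξ i x / S) := by
          simp only [hm]
        rw [hmx, hmx', ← mul_sub, Finset.sum_range_succ, add_sub_cancel_left,
          hx_upd]
    rw [gridDiv, Finset.sum_congr rfl (fun i _ => key i)]
    -- telescoping
    set f : ℕ → ℝ := fun k => R d N ξ k x / S ^ (d - k) with hf
    have hterm : ∀ i : Fin d,
        (h / S ^ (d - 1 - (i : ℕ))) *
            (R d N ξ ((i : ℕ) + 1) x - R d N ξ i x / S)
          = h * (f ((i : ℕ) + 1) - f (i : ℕ)) := by
      intro i
      have hi : (i : ℕ) < d := i.isLt
      have h1 : d - 1 - (i : ℕ) = d - ((i : ℕ) + 1) := by omega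
      have h2 : d - ((i : ℕ) + 1) + 1 = d - (i : ℕ) := by omega
      rw [hf]
      simp only
      rw [h1]
      have hpow : S ^ (d - (i : ℕ)) = S ^ (d - ((i : ℕ) + 1)) * S := by
        rw [← pow_succ, h2]
      rw [hpow]
      have hSp : S ^ (d - ((i : ℕ) + 1)) ≠ 0 := pow_ne_zero _ hS0
      field_simp
    rw [Finset.sum_congr rfl (fun i _ => hterm i), ← Finset.mul_sum]
    have htel : ∑ i : Fin d, (f ((i : ℕ) + 1) - f (i : ℕ)) = f d - f 0 := by
      rw [Fin.sum_univ_eq_sum_range (fun k => f (k + 1) - f k) d]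
      exact Finset.sum_range_sub f d
    rw [htel, hf]
    simp only
    rw [R_d, R_zero, hξ, Nat.sub_self, pow_zero, div_one, zero_div, sub_zero]
    field_simp
end

section
/- Discrete grid setting. Let p ∈ [1,∞) and ρ : Ω_h → ℝ with Σ_{x∈Ω_h} ρ(x) = 0. Then the feasible set { m : m is a flux satisfying the zero-flux boundary condition and div^h m = ρ on Ω_h } is nonempty, and the function m ↦ Σ_{x∈Ω_h} |m(x)|_p h^d attains its minimum on this set; that is, the discrete optimal transport (Beckmann) problem has a global minimizer. -/
open Filter Topology

/-!
A flux of size `h` along the single edge from `x - eᵢ` to `x` has divergence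
`δ_{x - eᵢ} - δ_x` and satisfies the zero-flux condition. Since the grid is connected, the
divergences of zero-flux fluxes therefore contain every `δ_x - δ_0`, hence every `ρ` of total
mass zero. The feasible set is then a nonempty closed affine subspace of a finite-dimensional
space, on which the cost is continuous and coercive (it dominates `h^d` times the sup norm),
so it attains its minimum.
-/

abbrev Grid (d N : ℕ) : Type := Fin d → Fin (N + 1)

namespace Grid

variable {d N : ℕ}

-- `x - eᵢ`, spelled as in `gridDiv`; truncated subtraction makes it `x` when `xᵢ = 0`.
def pred (x : Grid d N) (i : Fin d) : Grid d N :=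
  Function.update x i ⟨(x i : ℕ) - 1, lt_of_le_of_lt (Nat.sub_le _ _) (x i).isLt⟩

theorem pred_apply_self (x : Grid d N) (i : Fin d) : (x.pred i i : ℕ) = x i - 1 := by
  simp [pred]

theorem pred_eq_pred_iff {x y : Grid d N} {i : Fin d} (hx : (x i : ℕ) ≠ 0) :
    (y i : ℕ) ≠ 0 ∧ y.pred i = x.pred i ↔ y = x := by
  refine ⟨fun ⟨hy, hxy⟩ => funext fun j => ?_, fun hxy => by subst hxy; exact ⟨hx, rfl⟩⟩
  have hj := congrFun hxy j
  by_cases hji : j = i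
  · subst hji
    simp only [pred, Function.update_self, Fin.mk.injEq] at hj
    exact Fin.ext (by omega)
  · simpa [pred, Function.update_of_ne hji] using hj

end Grid

section Divergence

variable (d N : ℕ) (h : ℝ)

theorem gridDiv_eq (m : Grid d N → Fin d → ℝ) (x : Grid d N) :
    gridDiv d N h m x = (∑ i, (m x i - if (x i : ℕ) = 0 then 0 else m (x.pred i) i)) / h :=
  rfl

noncomputable def gridDivₗ : (Grid d N → Fin d → ℝ) →ₗ[ℝ] Grid d N → ℝ where
  toFun := gridDiv d N h
  map_add' m m' := by
    ext x
    simp only [gridDiv_eq, Pi.add_apply, ← add_div, ← Finset.sum_add_distrib]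
    congr 1
    refine Finset.sum_congr rfl fun i _ => ?_
    split_ifs <;> ring
  map_smul' c m := by
    ext x
    simp only [gridDiv_eq, Pi.smul_apply, smul_eq_mul, RingHom.id_apply, Finset.mul_sum,
      mul_div_assoc']
    congr 1
    refine Finset.sum_congr rfl fun i _ => ?_
    split_ifs <;> ring

def zeroFluxSubmodule : Submodule ℝ (Grid d N → Fin d → ℝ) where
  carrier := {m | ∀ x i, (x i : ℕ) = N → m x i = 0}
  add_mem' hm hm' x i hx := by simp [hm x i hx, hm' x i hx]
  zero_mem' _ _ _ := rfl
  smul_mem' c m hm x i hx := by simp [hm x i hx]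

noncomputable def divRange : Submodule ℝ (Grid d N → ℝ) :=
  (zeroFluxSubmodule d N).map (gridDivₗ d N h)

variable {d N h}

theorem gridDiv_single_pred (hh : h ≠ 0) {x : Grid d N} {i : Fin d} (hx : (x i : ℕ) ≠ 0) :
    gridDiv d N h (Pi.single (x.pred i) (Pi.single i h)) =
      Pi.single (x.pred i) 1 - Pi.single x 1 := by
  ext y
  have hout : ∑ j, (Pi.single (x.pred i) (Pi.single i h) : Grid d N → Fin d → ℝ) y j =
      if y = x.pred i then h else 0 := by
    by_cases hy : y = x.pred i <;> simp [hy]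
  have hin : ∑ j, (if (y j : ℕ) = 0 then 0
      else (Pi.single (x.pred i) (Pi.single i h) : Grid d N → Fin d → ℝ) (Grid.pred y j) j) =
        if y = x then h else 0 := by
    rw [Finset.sum_eq_single i
      (fun j _ hji => by simp [Pi.single_apply, ite_apply, hji]) (by simp)]
    have key := Grid.pred_eq_pred_iff (y := y) hx
    by_cases hy : (y i : ℕ) = 0 <;> by_cases hyx : Grid.pred y i = x.pred i <;>
      simp_all [Pi.single_apply]
  rw [gridDiv_eq, Finset.sum_sub_distrib, hout, hin]
  have hne : x.pred i ≠ x := fun he => by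
    have := congrArg (fun z : Grid d N => (z i : ℕ)) he
    simp only [Grid.pred_apply_self] at this
    omega
  by_cases hy : y = x.pred i
  · subst hy; simp [hne, hh]
  · by_cases hyx : y = x
    · subst hyx; simp [hne.symm, hh]
    · simp [hy, hyx]

theorem single_pred_sub_single_mem_divRange (hh : h ≠ 0) {x : Grid d N} {i : Fin d}
    (hx : (x i : ℕ) ≠ 0) :
    Pi.single (x.pred i) 1 - Pi.single x 1 ∈ divRange d N h := by
  refine ⟨_, fun y j hy => ?_, gridDiv_single_pred hh hx⟩
  by_cases hxy : y = x.pred i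
  · subst hxy
    by_cases hji : j = i
    · subst hji
      rw [Grid.pred_apply_self] at hy
      have := (x j).isLt
      omega
    · simp [hji]
  · simp [hxy]

-- The grid is connected: walk from `x` to the origin lowering one coordinate at a time.
theorem single_sub_single_zero_mem_divRange (hh : h ≠ 0) (x : Grid d N) :
    Pi.single x 1 - Pi.single 0 1 ∈ divRange d N h := by
  induction hs : ∑ i, (x i : ℕ) using Nat.strong_induction_on generalizing x with
  | _ n ih =>
  by_cases hx : x = 0
  · simp [hx]
  obtain ⟨i, hi⟩ : ∃ i, (x i : ℕ) ≠ 0 := by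
    by_contra! H
    exact hx (funext fun i => Fin.ext (H i))
  have hlt : ∑ j, (x.pred i j : ℕ) < n := hs ▸ Finset.sum_lt_sum
    (fun j _ => by by_cases hji : j = i <;> simp [Grid.pred, hji])
    ⟨i, Finset.mem_univ _, by rw [Grid.pred_apply_self]; omega⟩
  convert sub_mem (ih _ hlt (x.pred i) rfl) (single_pred_sub_single_mem_divRange hh hi) using 1
  abel

theorem mem_divRange_of_sum_eq_zero (hh : h ≠ 0) {ρ : Grid d N → ℝ} (hρ : ∑ x, ρ x = 0) :
    ρ ∈ divRange d N h := by
  have hρ_eq : ρ = ∑ x, ρ x • (Pi.single x 1 - Pi.single 0 1) := by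
    ext y
    simp [Finset.sum_apply, Pi.single_apply, mul_sub, Finset.sum_sub_distrib, hρ]
  rw [hρ_eq]
  exact Submodule.sum_mem _ fun x _ =>
    Submodule.smul_mem _ _ (single_sub_single_zero_mem_divRange hh x)

end Divergence

section LpNorm

variable {d : ℕ} {p : ℝ}

theorem lpNorm_eq_norm_toLp (hp : 0 < p) (v : Fin d → ℝ) :
    lpNorm d p v = ‖WithLp.toLp (ENNReal.ofReal p) v‖ := by
  rw [PiLp.norm_eq_sum (by rwa [ENNReal.toReal_ofReal hp.le]), ENNReal.toReal_ofReal hp.le]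
  simp [lpNorm]

theorem continuous_lpNorm (hp : 1 ≤ p) : Continuous (lpNorm d p) := by
  have : Fact (1 ≤ ENNReal.ofReal p) := ⟨by simpa using hp⟩
  simp_rw [funext (lpNorm_eq_norm_toLp (d := d) (by linarith))]
  exact (PiLp.continuous_toLp _ _).norm

theorem norm_le_lpNorm (hp : 1 ≤ p) (v : Fin d → ℝ) : ‖v‖ ≤ lpNorm d p v := by
  have : Fact (1 ≤ ENNReal.ofReal p) := ⟨by simpa using hp⟩
  rw [lpNorm_eq_norm_toLp (by linarith)]
  exact (pi_norm_le_iff_of_nonneg (norm_nonneg _)).2 fun i =>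
    PiLp.norm_apply_le (WithLp.toLp _ v) i

theorem tendsto_sum_lpNorm_cocompact {ι : Type*} [Fintype ι] (hp : 1 ≤ p) :
    Tendsto (fun m : ι → Fin d → ℝ => ∑ x, lpNorm d p (m x)) (cocompact _) atTop := by
  refine tendsto_atTop_mono (fun m => ?_) tendsto_norm_cocompact_atTop
  have hnonneg (v : Fin d → ℝ) : 0 ≤ lpNorm d p v :=
    (norm_nonneg v).trans (norm_le_lpNorm hp v)
  refine (pi_norm_le_iff_of_nonneg (Finset.sum_nonneg fun x _ => hnonneg _)).2 fun x => ?_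
  calc ‖m x‖ ≤ lpNorm d p (m x) := norm_le_lpNorm hp _
    _ ≤ ∑ y, lpNorm d p (m y) := Finset.single_le_sum (fun y _ => hnonneg _) (Finset.mem_univ x)

end LpNorm

theorem discrete_OT_hasMinimizer_general (d N : ℕ)
    (h : ℝ) (hh : 0 < h) (p : ℝ) (hp : 1 ≤ p)
    (ρ : (Fin d → Fin (N + 1)) → ℝ) (hρ : ∑ x : Fin d → Fin (N + 1), ρ x = 0) :
    ∃ m : (Fin d → Fin (N + 1)) → Fin d → ℝ,
      (∀ (x : Fin d → Fin (N + 1)) (i : Fin d), (x i : ℕ) = N → m x i = 0) ∧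
      (∀ x : Fin d → Fin (N + 1), gridDiv d N h m x = ρ x) ∧
      ∀ m' : (Fin d → Fin (N + 1)) → Fin d → ℝ,
        (∀ (x : Fin d → Fin (N + 1)) (i : Fin d), (x i : ℕ) = N → m' x i = 0) →
        (∀ x : Fin d → Fin (N + 1), gridDiv d N h m' x = ρ x) →
        ∑ x : Fin d → Fin (N + 1), lpNorm d p (m x) * h ^ d ≤
          ∑ x : Fin d → Fin (N + 1), lpNorm d p (m' x) * h ^ d := by
  set cost := fun m : Grid d N → Fin d → ℝ => ∑ x, lpNorm d p (m x) * h ^ d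
  set feasible :=
    (zeroFluxSubmodule d N : Set (Grid d N → Fin d → ℝ)) ∩ gridDivₗ d N h ⁻¹' {ρ}
  obtain ⟨m₀, hm₀, hdiv₀⟩ := mem_divRange_of_sum_eq_zero hh.ne' hρ
  have hclosed : IsClosed feasible := (Submodule.closed_of_finiteDimensional _).inter
    (isClosed_singleton.preimage (LinearMap.continuous_of_finiteDimensional _))
  have hcont : Continuous cost := continuous_finsetSum _ fun x _ =>
    ((continuous_lpNorm hp).comp (continuous_apply x)).mul continuous_const
  have hcoercive : Tendsto cost (cocompact _) atTop := by
    simpa only [cost, ← Finset.sum_mul] using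
      (tendsto_sum_lpNorm_cocompact hp).atTop_mul_const (pow_pos hh d)
  obtain ⟨m, ⟨hm_flux, hm_div⟩, hm_min⟩ := hcont.continuousOn.exists_isMinOn' hclosed
    (x₀ := m₀) ⟨hm₀, hdiv₀⟩
    ((hcoercive.eventually (eventually_ge_atTop _)).filter_mono inf_le_left)
  exact ⟨m, hm_flux, congrFun hm_div,
    fun m' hm'_flux hm'_div => hm_min ⟨hm'_flux, funext hm'_div⟩⟩

/-- The discrete optimal transport (Beckmann) problem
`min Σ_x |m(x)|_p h^d` over fluxes `m` satisfying the zero-flux boundary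
condition and `div^h m = ρ`, has a global minimizer (in particular, the
feasible set is nonempty). -/
theorem discrete_OT_hasMinimizer (d N : ℕ) (hd : 1 ≤ d) (hN : 1 ≤ N)
    (h : ℝ) (hh : 0 < h) (p : ℝ) (hp : 1 ≤ p)
    (ρ : (Fin d → Fin (N + 1)) → ℝ) (hρ : ∑ x : Fin d → Fin (N + 1), ρ x = 0) :
    ∃ m : (Fin d → Fin (N + 1)) → Fin d → ℝ,
      (∀ (x : Fin d → Fin (N + 1)) (i : Fin d), (x i : ℕ) = N → m x i = 0) ∧
      (∀ x : Fin d → Fin (N + 1), gridDiv d N h m x = ρ x) ∧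
      ∀ m' : (Fin d → Fin (N + 1)) → Fin d → ℝ,
        (∀ (x : Fin d → Fin (N + 1)) (i : Fin d), (x i : ℕ) = N → m' x i = 0) →
        (∀ x : Fin d → Fin (N + 1), gridDiv d N h m' x = ρ x) →
        ∑ x : Fin d → Fin (N + 1), lpNorm d p (m x) * h ^ d ≤
          ∑ x : Fin d → Fin (N + 1), lpNorm d p (m' x) * h ^ d :=
  discrete_OT_hasMinimizer_general d N h hh p hp ρ hρ
end

section
/- Let I be a nonempty finite set, μ > 0, φ* : I → ℝ, M ∈ ℝ with M ≥ max_{x∈I} |φ*(x)|, and α > M. Suppose η, φ : I → ℝ satisfy max_{x∈I} |η(x)| + max_{x∈I} |φ(x) − φ*(x)| ≤ min{1, μ} · (α − M). Then |η(x) + μ·φ(x)| ≤ α·μ for every x ∈ I, and consequently, for every x ∈ I, the function z ↦ α·μ·|z| + (1/2)·( z − (η(x) + μ·φ(x)) )² on ℝ attains its minimum uniquely at z = 0; i.e., the proximal map of α·μ·|·| sends η(x) + μ·φ(x) to 0. -/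
/-!
The estimate is pointwise: `|η x + μ φ x| ≤ |η x| + μ |φ x - φ* x| + μ |φ* x|`, and the weight
`min 1 μ` in the hypothesis is exactly what absorbs the mismatch between the coefficients `1`
and `μ` of the first two terms. Once `|a| ≤ λ`, the prox objective `λ |z| + (z - a)² / 2`
exceeds its value at `0` by `λ |z| - z a + z² / 2 ≥ z² / 2`, which is positive for `z ≠ 0`.
-/

lemma add_mul_le_mul_of_add_le_min_mul {A B μ c : ℝ} (hA : 0 ≤ A) (hB : 0 ≤ B) (hμ : 0 ≤ μ)
    (h : A + B ≤ min 1 μ * c) : A + μ * B ≤ μ * c := by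
  rcases le_total 1 μ with hμ1 | hμ1
  · rw [min_eq_left hμ1, one_mul] at h
    nlinarith
  · rw [min_eq_right hμ1] at h
    nlinarith

lemma abs_add_mul_le_mul {e p q A B M α μ : ℝ} (hμ : 0 ≤ μ) (he : |e| ≤ A)
    (hpq : |p - q| ≤ B) (hq : |q| ≤ M) (hAB : A + B ≤ min 1 μ * (α - M)) :
    |e + μ * p| ≤ α * μ := by
  have hp : |p| ≤ B + M := by
    calc |p| = |(p - q) + q| := by rw [sub_add_cancel]
      _ ≤ |p - q| + |q| := abs_add_le _ _
      _ ≤ B + M := add_le_add hpq hq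
  have hweighted : A + μ * B ≤ μ * (α - M) :=
    add_mul_le_mul_of_add_le_min_mul ((abs_nonneg e).trans he) ((abs_nonneg _).trans hpq) hμ hAB
  calc |e + μ * p| ≤ |e| + μ * |p| := by
        simpa only [abs_mul, abs_of_nonneg hμ] using abs_add_le e (μ * p)
    _ ≤ A + μ * (B + M) := add_le_add he (mul_le_mul_of_nonneg_left hp hμ)
    _ ≤ α * μ := by linarith

lemma prox_abs_objective_zero_lt {a l z : ℝ} (ha : |a| ≤ l) (hz : z ≠ 0) :
    l * |(0 : ℝ)| + (1 / 2) * ((0 : ℝ) - a) ^ 2 < l * |z| + (1 / 2) * (z - a) ^ 2 := by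
  have hza : z * a ≤ l * |z| := by
    calc z * a ≤ |z| * |a| := (le_abs_self _).trans (abs_mul z a).le
      _ ≤ |z| * l := mul_le_mul_of_nonneg_left ha (abs_nonneg z)
      _ = l * |z| := mul_comm _ _
  have hz2 : 0 < z ^ 2 := by positivity
  rw [abs_zero]
  nlinarith

theorem prox_to_zero_general {I : Type*} [Fintype I] [Nonempty I]
    (μ : ℝ) (hμ : 0 < μ) (φstar : I → ℝ) (M : ℝ)
    (hM : Finset.univ.sup' Finset.univ_nonempty (fun x => |φstar x|) ≤ M)
    (α : ℝ)
    (η φ : I → ℝ)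
    (hbound : Finset.univ.sup' Finset.univ_nonempty (fun x => |η x|) +
        Finset.univ.sup' Finset.univ_nonempty (fun x => |φ x - φstar x|) ≤
      min 1 μ * (α - M)) :
    (∀ x : I, |η x + μ * φ x| ≤ α * μ) ∧
    (∀ x : I, ∀ z : ℝ, z ≠ 0 →
      α * μ * |(0 : ℝ)| + (1 / 2) * ((0 : ℝ) - (η x + μ * φ x)) ^ 2
        < α * μ * |z| + (1 / 2) * (z - (η x + μ * φ x)) ^ 2) := by
  have hpointwise (x : I) : |η x + μ * φ x| ≤ α * μ :=
    abs_add_mul_le_mul hμ.le (Finset.le_sup' (fun x => |η x|) (Finset.mem_univ x))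
      (Finset.le_sup' (fun x => |φ x - φstar x|) (Finset.mem_univ x))
      ((Finset.le_sup' (fun x => |φstar x|) (Finset.mem_univ x)).trans hM) hbound
  exact ⟨hpointwise, fun x _ hz => prox_abs_objective_zero_lt (hpointwise x) hz⟩

/-- key estimate for the reduction of UOT iterates to OT
iterates.  If `M ≥ max_x |φ*(x)|`, `α > M` and
`max_x |η(x)| + max_x |φ(x) − φ*(x)| ≤ min{1, μ}·(α − M)`, then
`|η(x) + μ·φ(x)| ≤ α·μ` for every `x`, and consequently for every `x` the function
`z ↦ α·μ·|z| + (1/2)·(z − (η(x) + μ·φ(x)))²` attains its minimum uniquely at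
`z = 0` (i.e. the proximal map of `α·μ·|·|` sends `η(x) + μ·φ(x)` to `0`). -/
theorem prox_to_zero {I : Type*} [Fintype I] [Nonempty I]
    (μ : ℝ) (hμ : 0 < μ) (φstar : I → ℝ) (M : ℝ)
    (hM : Finset.univ.sup' Finset.univ_nonempty (fun x => |φstar x|) ≤ M)
    (α : ℝ) (hα : M < α)
    (η φ : I → ℝ)
    (hbound : Finset.univ.sup' Finset.univ_nonempty (fun x => |η x|) +
        Finset.univ.sup' Finset.univ_nonempty (fun x => |φ x - φstar x|) ≤
      min 1 μ * (α - M)) :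
    (∀ x : I, |η x + μ * φ x| ≤ α * μ) ∧
    (∀ x : I, ∀ z : ℝ, z ≠ 0 →
      α * μ * |(0 : ℝ)| + (1 / 2) * ((0 : ℝ) - (η x + μ * φ x)) ^ 2
        < α * μ * |z| + (1 / 2) * (z - (η x + μ * φ x)) ^ 2) :=
  prox_to_zero_general μ hμ φstar M hM α η φ hbound
end

section
/- Discrete grid setting. Let μ > 0, let φ* : Ω_h → ℝ, and let α > max_{x∈Ω_h} |φ*(x)|. Let (η^k)_{k∈ℕ} and (φ^k)_{k∈ℕ} be sequences of functions from Ω_h to ℝ satisfying, for every k ∈ ℕ and every x ∈ Ω_h, the soft-thresholding update η^{k+1}(x) = sign( η^k(x) + μ·φ^k(x) ) · max{ |η^k(x) + μ·φ^k(x)| − α·μ, 0 } (the proximal map of α·μ·|·| applied to η^k(x) + μ·φ^k(x)). If max_{x∈Ω_h} |η^k(x)| → 0 and max_{x∈Ω_h} |φ^k(x) − φ*(x)| → 0 as k → ∞, then there exists K ∈ ℕ such that η^k(x) = 0 for every x ∈ Ω_h and every k ≥ K. -/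
open Filter Topology

/-!
Once `η^k` and `φ^k - φ*` are uniformly small, the argument `η^k + μ φ^k` of the soft-thresholding
step lies in `[-α μ, α μ]`, because `α` has room to spare above `max |φ*|`; soft-thresholding at
level `α μ` then maps it to `0`.
-/

noncomputable def softThreshold (t a : ℝ) : ℝ :=
  Real.sign a * max (|a| - t) 0

theorem softThreshold_eq_zero_of_abs_le {t a : ℝ} (ha : |a| ≤ t) : softThreshold t a = 0 := by
  rw [softThreshold, max_eq_right (by linarith), mul_zero]

theorem Filter.Tendsto.eventually_forall_lt_of_sup' {α ι : Type*} {l : Filter α} {s : Finset ι}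
    (hs : s.Nonempty) {g : α → ι → ℝ} {c ε : ℝ}
    (hg : Tendsto (fun k => s.sup' hs (g k)) l (𝓝 c)) (hε : c < ε) :
    ∀ᶠ k in l, ∀ x ∈ s, g k x < ε :=
  (hg.eventually_lt_const hε).mono fun _ hk _ hx => (Finset.le_sup' _ hx).trans_lt hk

theorem abs_add_mul_le_of_abs_sub_le {a b c μ ε α : ℝ} (hμ : 0 ≤ μ) (ha : |a| ≤ μ * ε)
    (hb : |b - c| ≤ ε) (hα : |c| + 2 * ε ≤ α) : |a + μ * b| ≤ α * μ :=
  calc |a + μ * b| ≤ |a| + μ * |b| := by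
        rw [← abs_of_nonneg hμ, ← abs_mul, abs_of_nonneg hμ]; exact abs_add_le _ _
    _ ≤ μ * ε + μ * (ε + |c|) := by
        gcongr
        calc |b| = |(b - c) + c| := by ring_nf
          _ ≤ |b - c| + |c| := abs_add_le _ _
          _ ≤ ε + |c| := by linarith
    _ ≤ α * μ := by nlinarith

theorem uot_iterates_reduce_to_ot_general (d N : ℕ)
    (μ : ℝ) (hμ : 0 < μ)
    (φstar : (Fin d → Fin (N + 1)) → ℝ) (α : ℝ)
    (hα : Finset.univ.sup' Finset.univ_nonempty (fun x => |φstar x|) < α)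
    (η φ : ℕ → (Fin d → Fin (N + 1)) → ℝ)
    (hupd : ∀ (k : ℕ) (x : Fin d → Fin (N + 1)),
      η (k + 1) x = Real.sign (η k x + μ * φ k x) *
        max (|η k x + μ * φ k x| - α * μ) 0)
    (hη : Tendsto
      (fun k => Finset.univ.sup' Finset.univ_nonempty (fun x => |η k x|))
      atTop (𝓝 0))
    (hφ : Tendsto
      (fun k => Finset.univ.sup' Finset.univ_nonempty (fun x => |φ k x - φstar x|))
      atTop (𝓝 0)) :
    ∃ K : ℕ, ∀ k ≥ K, ∀ x : Fin d → Fin (N + 1), η k x = 0 := by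
  set M := Finset.univ.sup' Finset.univ_nonempty (fun x => |φstar x|)
  set ε := (α - M) / 2
  have hε : 0 < ε := by simp only [ε]; linarith
  obtain ⟨K, hK⟩ := eventually_atTop.mp
    ((hη.eventually_forall_lt_of_sup' _ (by positivity : (0 : ℝ) < μ * ε)).and
      (hφ.eventually_forall_lt_of_sup' _ hε))
  refine ⟨K + 1, fun k hk x => ?_⟩
  obtain ⟨m, rfl⟩ : ∃ m, k = m + 1 := ⟨k - 1, by omega⟩
  obtain ⟨hηm, hφm⟩ := hK m (by omega)
  have hφstar : |φstar x| ≤ M := Finset.le_sup' (fun y => |φstar y|) (Finset.mem_univ x)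
  rw [hupd]
  exact softThreshold_eq_zero_of_abs_le <| abs_add_mul_le_of_abs_sub_le hμ.le
    (hηm x (Finset.mem_univ x)).le (hφm x (Finset.mem_univ x)).le (by simp only [ε]; linarith)

/-- the UOT source iterates vanish eventually.
Let `α > max_x |φ*(x)|` and suppose the source iterates `η^k` follow the
soft-thresholding update
`η^{k+1}(x) = sign(η^k(x) + μ φ^k(x)) · max{|η^k(x) + μ φ^k(x)| − α μ, 0}`
(the proximal map of `α·μ·|·|`).  If `max_x |η^k(x)| → 0` and
`max_x |φ^k(x) − φ*(x)| → 0`, then `η^k ≡ 0` on the grid for all large `k`. -/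
theorem uot_iterates_reduce_to_ot (d N : ℕ) (hd : 1 ≤ d) (hN : 1 ≤ N)
    (h : ℝ) (hh : 0 < h) (μ : ℝ) (hμ : 0 < μ)
    (φstar : (Fin d → Fin (N + 1)) → ℝ) (α : ℝ)
    (hα : Finset.univ.sup' Finset.univ_nonempty (fun x => |φstar x|) < α)
    (η φ : ℕ → (Fin d → Fin (N + 1)) → ℝ)
    (hupd : ∀ (k : ℕ) (x : Fin d → Fin (N + 1)),
      η (k + 1) x = Real.sign (η k x + μ * φ k x) *
        max (|η k x + μ * φ k x| - α * μ) 0)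
    (hη : Tendsto
      (fun k => Finset.univ.sup' Finset.univ_nonempty (fun x => |η k x|))
      atTop (𝓝 0))
    (hφ : Tendsto
      (fun k => Finset.univ.sup' Finset.univ_nonempty (fun x => |φ k x - φstar x|))
      atTop (𝓝 0)) :
    ∃ K : ℕ, ∀ k ≥ K, ∀ x : Fin d → Fin (N + 1), η k x = 0 :=
  uot_iterates_reduce_to_ot_general d N μ hμ φstar α hα η φ hupd hη hφ
end
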